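/- arXiv:2504.07105 — 14 statements merged into one kernel-verified Lean document; each statement's English description precedes it below -/
import Mathlib

section
/- Under the fixed clicking policy with block length s and clicking number T₀, for every i ∈ ℕ the opinion at the start of block i satisfies x(i·s) = (1 − Υᵢ)·x₀ + Υᵢ·u₀, where Υᵢ = ((1 − (B^s Z^{T₀})^i)/(1 − B^s Z^{T₀})) · (1 − η) · B^{s−T₀} · (1 − β^{T₀}). -/
set_option maxHeartbeats 1000000


/-- Under the fixed clicking policy with block length `s` and clicking number `T₀`
(`clk k = 1` iff `k % s < T₀`), for every `i` the opinion at the start of block `i` satisfies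
`x (i*s) = (1 - Υ i) * x₀ + Υ i * u₀`, where
`Υ i = ((1 - (B^s * Z^T₀)^i) / (1 - B^s * Z^T₀)) * (1 - η) * B^(s - T₀) * (1 - β^T₀)`,
with `Z = α + β`, `B = β / (α + β)`, `η = α / (1 - β)`. -/
theorem fixed_policy_block_opinion
    (α β x₀ u₀ : ℝ) (hα : 0 < α) (hβ : 0 < β) (hαβ : α + β ≤ 1)
    (hx₀ : -1 ≤ x₀ ∧ x₀ ≤ 1) (hu₀ : -1 ≤ u₀ ∧ u₀ ≤ 1)
    (s T₀ : ℕ) (hs : 1 ≤ s) (hT₀ : T₀ ≤ s)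
    (clk : ℕ → ℕ) (hclk : ∀ k, clk k = if k % s < T₀ then 1 else 0)
    (x : ℕ → ℝ) (hx0 : x 0 = x₀)
    (hdyn : ∀ k, x (k + 1) =
      if clk k = 1 then α * x₀ + β * x k + (1 - α - β) * u₀
      else α / (α + β) * x₀ + β / (α + β) * x k)
    (Υ : ℕ → ℝ)
    (hΥ : ∀ i, Υ i =
      (1 - ((β / (α + β)) ^ s * (α + β) ^ T₀) ^ i) /
        (1 - (β / (α + β)) ^ s * (α + β) ^ T₀) *
        (1 - α / (1 - β)) * (β / (α + β)) ^ (s - T₀) * (1 - β ^ T₀)) :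
    ∀ i : ℕ, x (i * s) = (1 - Υ i) * x₀ + Υ i * u₀ := by
  have hZ0 : (0:ℝ) < α + β := by linarith
  have hZne : (α + β : ℝ) ≠ 0 := ne_of_gt hZ0
  have hβ1 : β < 1 := by linarith
  have hβne : (1:ℝ) - β ≠ 0 := by linarith
  set Z : ℝ := α + β with hZ
  set B : ℝ := β / Z with hB
  set η : ℝ := α / (1 - β) with hη
  set q : ℝ := B ^ s * Z ^ T₀ with hq
  have hB0 : 0 < B := div_pos hβ hZ0
  have hB1 : B < 1 := by rw [hB, div_lt_one hZ0]; linarith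
  have hq1 : q < 1 := by
    have h1 : B ^ s < 1 := pow_lt_one₀ hB0.le hB1 (by omega)
    have h2 : Z ^ T₀ ≤ 1 := pow_le_one₀ hZ0.le hαβ
    have h3 : 0 < B ^ s := pow_pos hB0 s
    nlinarith
  have hqne : (1:ℝ) - q ≠ 0 := by linarith
  have hβBZ : β = B * Z := by rw [hB]; field_simp
  have hqβ : q = B ^ (s - T₀) * β ^ T₀ := by
    rw [hq, hβBZ, mul_pow, ← mul_assoc, ← pow_add]
    congr 2
    omega
  set P : ℝ := η * x₀ + (1 - η) * u₀ with hP
  have key : ∀ i, x ((i + 1) * s) =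
      B ^ (s - T₀) * (β ^ T₀ * x (i * s) + (1 - β ^ T₀) * P) + (1 - B ^ (s - T₀)) * x₀ := by
    intro i
    have L1 : ∀ j, j ≤ T₀ → x (i * s + j) = β ^ j * x (i * s) + (1 - β ^ j) * P := by
      intro j
      induction j with
      | zero => intro _; norm_num
      | succ j ih =>
        intro hj
        have hj' : j ≤ T₀ := by omega
        have hjs : j < s := by omega
        have hmod : (i * s + j) % s = j := by
          rw [Nat.add_comm, Nat.add_mul_mod_self_right, Nat.mod_eq_of_lt hjs]
        have hclick : clk (i * s + j) = 1 := by
          rw [hclk, hmod, if_pos (by omega)]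
        have hd := hdyn (i * s + j)
        rw [hclick, if_pos rfl] at hd
        rw [show i * s + (j + 1) = (i * s + j) + 1 from rfl, hd, ih hj', hP, hη]
        field_simp
        ring
    have L2 : ∀ m, m ≤ s - T₀ →
        x (i * s + T₀ + m) = B ^ m * x (i * s + T₀) + (1 - B ^ m) * x₀ := by
      intro m
      induction m with
      | zero => intro _; norm_num
      | succ m ih =>
        intro hm
        have hm' : m ≤ s - T₀ := by omega
        have hlt : T₀ + m < s := by omega
        have hmod : (i * s + T₀ + m) % s = T₀ + m := by
          rw [add_assoc, Nat.add_comm, Nat.add_mul_mod_self_right, Nat.mod_eq_of_lt hlt]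
        have hclick : clk (i * s + T₀ + m) = 0 := by
          rw [hclk, hmod, if_neg (by omega)]
        have hd := hdyn (i * s + T₀ + m)
        rw [hclick, if_neg (by norm_num)] at hd
        have hαη : α / Z = 1 - B := by
          rw [hB]; field_simp; rw [hZ]; ring
        rw [show i * s + T₀ + (m + 1) = (i * s + T₀ + m) + 1 from rfl, hd, ih hm', hαη]
        ring
    have h2 := L2 (s - T₀) le_rfl
    have h1 := L1 T₀ le_rfl
    rw [show i * s + T₀ + (s - T₀) = (i + 1) * s by
      rw [add_assoc, Nat.add_sub_cancel' hT₀, Nat.succ_mul]] at h2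
    rw [h2, h1]
  intro i
  induction i with
  | zero =>
    rw [hΥ]
    simp only [Nat.zero_mul, hx0, pow_zero, sub_self, zero_div, zero_mul, mul_zero,
      sub_zero, one_mul, add_zero]
  | succ i ih =>
    have hrec : Υ (i + 1) = q * Υ i + (1 - η) * B ^ (s - T₀) * (1 - β ^ T₀) := by
      rw [hΥ, hΥ]
      have hstep : (1 - q ^ (i + 1)) / (1 - q) = q * ((1 - q ^ i) / (1 - q)) + 1 := by
        field_simp
        ring
      rw [hstep]
      ring
    rw [key i, ih, hrec, hqβ, hP]
    ring
end

section
/- Under the fixed clicking policy with block length s and clicking number T₀, the weight Υᵢ = ((1 − (B^s Z^{T₀})^i)/(1 − B^s Z^{T₀})) · (1 − η) · B^{s−T₀} · (1 − β^{T₀}) satisfies 0 ≤ Υᵢ ≤ 1 for every i ∈ ℕ; hence the opinion x(i·s) = (1 − Υᵢ)·x₀ + Υᵢ·u₀ at the start of each block is a convex combination of the innate opinion x₀ and the recommendation u₀. -/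
/-!
A clicking step is an affine contraction with factor `β` towards
`p = η x₀ + (1 - η) u₀`, a non-clicking step one with factor `B` towards `x₀`. A block of
`T₀` clicking steps followed by `s - T₀` non-clicking ones therefore sends
`x₀ + w (u₀ - x₀)` to `x₀ + (q w + c) (u₀ - x₀)` with `q = B^(s-T₀) β^T₀ = B^s Z^T₀` and
`c = (1 - η) B^(s-T₀) (1 - β^T₀)`. Starting from `w = 0`, the weight after `i` blocks is the
geometric sum `Υᵢ = c (1 - qⁱ) / (1 - q)`, and `c ≤ B^(s-T₀) - q ≤ 1 - q` keeps it in `[0, 1]`.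
-/

theorem iterate_affine_contraction {y : ℕ → ℝ} {a p : ℝ} {n m : ℕ}
    (h : ∀ j < m, y (n + j + 1) = a * y (n + j) + (1 - a) * p) :
    y (n + m) = a ^ m * y n + (1 - a ^ m) * p := by
  induction m with
  | zero => simp
  | succ m ih =>
    rw [← add_assoc, h m m.lt_succ_self, ih fun j hj => h j (by omega)]
    ring

theorem two_phase_block_step {y : ℕ → ℝ} {a b p r : ℝ} {s T : ℕ} (hT : T ≤ s)
    (hfirst : ∀ k, k % s < T → y (k + 1) = a * y k + (1 - a) * p)
    (hsecond : ∀ k, T ≤ k % s → y (k + 1) = b * y k + (1 - b) * r) (i : ℕ) :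
    y ((i + 1) * s) =
      b ^ (s - T) * (a ^ T * y (i * s) + (1 - a ^ T) * p) + (1 - b ^ (s - T)) * r := by
  have hmod : ∀ j < s, (i * s + j) % s = j := fun j hj => by
    rw [Nat.mul_comm, Nat.mul_add_mod, Nat.mod_eq_of_lt hj]
  have hfirst_block := iterate_affine_contraction (n := i * s) (m := T) fun j hj =>
    hfirst _ (by rw [hmod j (by omega)]; exact hj)
  have hsecond_block := iterate_affine_contraction (n := i * s + T) (m := s - T) fun j hj =>
    hsecond _ (by rw [add_assoc, hmod _ (by omega)]; omega)
  rw [show (i + 1) * s = i * s + T + (s - T) by rw [add_one_mul]; omega,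
    hsecond_block, hfirst_block]

noncomputable def geomWeight (q c : ℝ) (i : ℕ) : ℝ := (1 - q ^ i) / (1 - q) * c

namespace geomWeight

variable {q c : ℝ}

theorem zero : geomWeight q c 0 = 0 := by simp [geomWeight]

theorem succ (hq : q ≠ 1) (i : ℕ) : geomWeight q c (i + 1) = q * geomWeight q c i + c := by
  have : 1 - q ≠ 0 := sub_ne_zero.2 hq.symm
  unfold geomWeight
  field_simp
  ring

theorem nonneg (hq0 : 0 ≤ q) (hq1 : q < 1) (hc : 0 ≤ c) (i : ℕ) : 0 ≤ geomWeight q c i :=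
  mul_nonneg (div_nonneg (sub_nonneg.2 (pow_le_one₀ hq0 hq1.le)) (sub_nonneg.2 hq1.le)) hc

theorem le_one (hq0 : 0 ≤ q) (hq1 : q < 1) (hc0 : 0 ≤ c) (hc : c ≤ 1 - q) (i : ℕ) :
    geomWeight q c i ≤ 1 := by
  rw [geomWeight, div_mul_eq_mul_div, div_le_one (sub_pos.2 hq1)]
  nlinarith [mul_nonneg (pow_nonneg hq0 i) hc0]

end geomWeight

theorem eq_convex_combination_of_affine_orbit {y : ℕ → ℝ} {q c x₀ u₀ : ℝ} (hq : q ≠ 1)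
    (hy0 : y 0 = x₀) (hy : ∀ i, y (i + 1) = x₀ + q * (y i - x₀) + c * (u₀ - x₀)) (i : ℕ) :
    y i = (1 - geomWeight q c i) * x₀ + geomWeight q c i * u₀ := by
  induction i with
  | zero => simp [hy0, geomWeight.zero]
  | succ i ih =>
    rw [hy, ih, geomWeight.succ hq]
    ring

section OpinionDynamics

variable {α β : ℝ}

theorem click_step_eq_affine (hβ : β ≠ 1) (x₀ u₀ y : ℝ) :
    α * x₀ + β * y + (1 - α - β) * u₀ =
      β * y + (1 - β) * (α / (1 - β) * x₀ + (1 - α / (1 - β)) * u₀) := by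
  have : 1 - β ≠ 0 := sub_ne_zero.2 hβ.symm
  field_simp
  ring

theorem rest_step_eq_affine (hZ : α + β ≠ 0) (x₀ y : ℝ) :
    α / (α + β) * x₀ + β / (α + β) * y = β / (α + β) * y + (1 - β / (α + β)) * x₀ := by
  field_simp
  ring

theorem block_ratio_eq (hZ : α + β ≠ 0) {s T : ℕ} (hT : T ≤ s) :
    (β / (α + β)) ^ (s - T) * β ^ T = (β / (α + β)) ^ s * (α + β) ^ T := by
  calc (β / (α + β)) ^ (s - T) * β ^ T
      = (β / (α + β)) ^ (s - T) * (β / (α + β) * (α + β)) ^ T := by rw [div_mul_cancel₀ β hZ]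
    _ = (β / (α + β)) ^ s * (α + β) ^ T := by rw [mul_pow, ← mul_assoc, pow_sub_mul_pow _ hT]

theorem block_ratio_lt_one (hα : 0 < α) (hβ : 0 < β) (hαβ : α + β ≤ 1) {s : ℕ} (hs : 1 ≤ s)
    (T : ℕ) : (β / (α + β)) ^ s * (α + β) ^ T < 1 :=
  calc (β / (α + β)) ^ s * (α + β) ^ T
      ≤ (β / (α + β)) ^ s :=
        mul_le_of_le_one_right (by positivity) (pow_le_one₀ (by positivity) hαβ)
    _ < 1 := pow_lt_one₀ (by positivity) ((div_lt_one (by positivity)).2 (by linarith)) (by omega)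

theorem block_gain_nonneg (hα : 0 < α) (hβ : 0 < β) (hαβ : α + β ≤ 1) (s T : ℕ) :
    0 ≤ (1 - α / (1 - β)) * (β / (α + β)) ^ (s - T) * (1 - β ^ T) := by
  have hη : α / (1 - β) ≤ 1 := (div_le_one (by linarith)).2 (by linarith)
  have hβT : β ^ T ≤ 1 := pow_le_one₀ hβ.le (by linarith)
  have hB : 0 ≤ (β / (α + β)) ^ (s - T) := by positivity
  exact mul_nonneg (mul_nonneg (by linarith) hB) (by linarith)

theorem block_gain_le (hα : 0 < α) (hβ : 0 < β) (hαβ : α + β ≤ 1) {s T : ℕ} (hT : T ≤ s) :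
    (1 - α / (1 - β)) * (β / (α + β)) ^ (s - T) * (1 - β ^ T) ≤
      1 - (β / (α + β)) ^ s * (α + β) ^ T := by
  have hη : 0 ≤ α / (1 - β) := div_nonneg hα.le (by linarith)
  have hβT : β ^ T ≤ 1 := pow_le_one₀ hβ.le (by linarith)
  have hB0 : 0 ≤ (β / (α + β)) ^ (s - T) := by positivity
  have hB1 : (β / (α + β)) ^ (s - T) ≤ 1 :=
    pow_le_one₀ (by positivity) ((div_le_one (by positivity)).2 (by linarith))
  rw [← block_ratio_eq (by positivity) hT]
  nlinarith [mul_nonneg (mul_nonneg hη hB0) (sub_nonneg.2 hβT)]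

end OpinionDynamics

theorem fixed_policy_convex_combination_general
    (α β x₀ u₀ : ℝ) (hα : 0 < α) (hβ : 0 < β) (hαβ : α + β ≤ 1)
    (s T₀ : ℕ) (hs : 1 ≤ s) (hT₀ : T₀ ≤ s)
    (clk : ℕ → ℕ) (hclk : ∀ k, clk k = if k % s < T₀ then 1 else 0)
    (x : ℕ → ℝ) (hx0 : x 0 = x₀)
    (hdyn : ∀ k, x (k + 1) =
      if clk k = 1 then α * x₀ + β * x k + (1 - α - β) * u₀
      else α / (α + β) * x₀ + β / (α + β) * x k)
    (Υ : ℕ → ℝ)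
    (hΥ : ∀ i, Υ i =
      (1 - ((β / (α + β)) ^ s * (α + β) ^ T₀) ^ i) /
        (1 - (β / (α + β)) ^ s * (α + β) ^ T₀) *
        (1 - α / (1 - β)) * (β / (α + β)) ^ (s - T₀) * (1 - β ^ T₀)) :
    ∀ i : ℕ, 0 ≤ Υ i ∧ Υ i ≤ 1 ∧ x (i * s) = (1 - Υ i) * x₀ + Υ i * u₀ := by
  have hβ1 : β < 1 := by linarith
  have hZ : α + β ≠ 0 := by positivity
  set B := β / (α + β)
  set η := α / (1 - β)
  set q := B ^ s * (α + β) ^ T₀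
  set c := (1 - η) * B ^ (s - T₀) * (1 - β ^ T₀)
  have hq : B ^ (s - T₀) * β ^ T₀ = q := block_ratio_eq hZ hT₀
  have hq0 : 0 ≤ q := by positivity
  have hq1 : q < 1 := block_ratio_lt_one hα hβ hαβ hs T₀
  have hc0 : 0 ≤ c := block_gain_nonneg hα hβ hαβ s T₀
  have hc1 : c ≤ 1 - q := block_gain_le hα hβ hαβ hT₀
  have hblock := two_phase_block_step (y := x) hT₀
    (fun k hk => by rw [hdyn, hclk, if_pos hk, if_pos rfl, click_step_eq_affine hβ1.ne])
    (fun k hk => by rw [hdyn, hclk, if_neg hk.not_gt, if_neg zero_ne_one, rest_step_eq_affine hZ])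
  have hΥq : ∀ i, Υ i = geomWeight q c i := fun i => by rw [hΥ, geomWeight]; ring
  intro i
  rw [hΥq]
  refine ⟨geomWeight.nonneg hq0 hq1 hc0 i, geomWeight.le_one hq0 hq1 hc0 hc1 i,
    eq_convex_combination_of_affine_orbit (y := fun i => x (i * s)) hq1.ne (by simpa using hx0)
      (fun i => ?_) i⟩
  rw [hblock, ← hq]
  simp only [c, B, η]
  ring

/-- Under the fixed clicking policy, the weight
`Υ i = ((1 - (B^s * Z^T₀)^i) / (1 - B^s * Z^T₀)) * (1 - η) * B^(s - T₀) * (1 - β^T₀)`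
satisfies `0 ≤ Υ i ≤ 1` for every `i`; hence the opinion at the start of each block,
`x (i*s) = (1 - Υ i) * x₀ + Υ i * u₀`, is a convex combination of `x₀` and `u₀`. -/
theorem fixed_policy_convex_combination
    (α β x₀ u₀ : ℝ) (hα : 0 < α) (hβ : 0 < β) (hαβ : α + β ≤ 1)
    (hx₀ : -1 ≤ x₀ ∧ x₀ ≤ 1) (hu₀ : -1 ≤ u₀ ∧ u₀ ≤ 1)
    (s T₀ : ℕ) (hs : 1 ≤ s) (hT₀ : T₀ ≤ s)
    (clk : ℕ → ℕ) (hclk : ∀ k, clk k = if k % s < T₀ then 1 else 0)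
    (x : ℕ → ℝ) (hx0 : x 0 = x₀)
    (hdyn : ∀ k, x (k + 1) =
      if clk k = 1 then α * x₀ + β * x k + (1 - α - β) * u₀
      else α / (α + β) * x₀ + β / (α + β) * x k)
    (Υ : ℕ → ℝ)
    (hΥ : ∀ i, Υ i =
      (1 - ((β / (α + β)) ^ s * (α + β) ^ T₀) ^ i) /
        (1 - (β / (α + β)) ^ s * (α + β) ^ T₀) *
        (1 - α / (1 - β)) * (β / (α + β)) ^ (s - T₀) * (1 - β ^ T₀)) :
    ∀ i : ℕ, 0 ≤ Υ i ∧ Υ i ≤ 1 ∧ x (i * s) = (1 - Υ i) * x₀ + Υ i * u₀ :=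
  fixed_policy_convex_combination_general α β x₀ u₀ hα hβ hαβ s T₀ hs hT₀ clk hclk x hx0 hdyn Υ hΥ
end

section
/- Under the decreasing clicking policy with block length s, initial clicking number T₀ and rate κ (with κ^{i−1} dividing T₀), for every block index i ≥ 1 the opinion at the start of block i satisfies x(i·s) = (1 − Υᵢ)·x₀ + Υᵢ·u₀, where Υᵢ = (1 − η) · Σ_{j=0}^{i−1} B^{(j+1)s − T₀/κ^{i−j−1}} · Z^{Σ_{q=0}^{j−1} T₀/κ^{i−1−q}} · (1 − β^{T₀/κ^{i−j−1}}). -/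
/-!
Within a block the clicking steps contract the opinion towards the mixture
`η x₀ + (1 - η) u₀` at rate `β`, and the remaining steps contract it towards `x₀` at rate
`B = β / (α + β)`. Hence one block is an affine map preserving the form
`(1 - Υ) x₀ + Υ u₀`, and `Υ` obeys the linear recurrence
`Υₙ₊₁ = B^(s - Tₙ) (β^Tₙ Υₙ + (1 - η)(1 - β^Tₙ))`. Since `B^(s - t) β^t = B^s Z^t`, unrolling
this recurrence gives the stated sum.
-/

open Finset

lemma affine_iterate {R : Type*} [CommRing R] {c e : R} {f : ℕ → R} {a t : ℕ}
    (h : ∀ r < t, f (a + r + 1) = c * f (a + r) + (1 - c) * e) :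
    f (a + t) = c ^ t * f a + (1 - c ^ t) * e := by
  induction t with
  | zero => simp
  | succ t ih =>
    rw [← add_assoc, h t t.lt_succ_self, ih fun r hr => h r (hr.trans t.lt_succ_self)]
    ring

lemma Nat.mul_add_div_of_lt {j s r : ℕ} (hr : r < s) : (j * s + r) / s = j := by
  rw [mul_comm, Nat.mul_add_div (by omega), Nat.div_eq_of_lt hr, add_zero]

/-- The weight `Υₙ` of the recommendation `u₀` in the opinion after `n` blocks, when block `j`
clicks during its first `T j` steps. -/
noncomputable def recommendationWeight (α β : ℝ) (s : ℕ) (T : ℕ → ℕ) (n : ℕ) : ℝ :=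
  (1 - α / (1 - β)) * ∑ j ∈ range n,
    (β / (α + β)) ^ ((j + 1) * s - T (n - j - 1)) *
      (α + β) ^ (∑ q ∈ range j, T (n - 1 - q)) * (1 - β ^ T (n - j - 1))

section

variable {α β x₀ u₀ : ℝ} {s : ℕ} {T : ℕ → ℕ}

lemma div_add_pow_sub_mul_pow (hZ : α + β ≠ 0) {t : ℕ} (ht : t ≤ s) :
    (β / (α + β)) ^ (s - t) * β ^ t = (β / (α + β)) ^ s * (α + β) ^ t := by
  calc (β / (α + β)) ^ (s - t) * β ^ t
      = (β / (α + β)) ^ (s - t) * (β / (α + β) * (α + β)) ^ t := by rw [div_mul_cancel₀ β hZ]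
    _ = (β / (α + β)) ^ s * (α + β) ^ t := by
      rw [mul_pow, ← mul_assoc, ← pow_add, Nat.sub_add_cancel ht]

lemma recommendationWeight_succ (hZ : α + β ≠ 0) (hT : ∀ j, T j ≤ s) (n : ℕ) :
    recommendationWeight α β s T (n + 1) = (β / (α + β)) ^ (s - T n) *
      (β ^ T n * recommendationWeight α β s T n + (1 - α / (1 - β)) * (1 - β ^ T n)) := by
  set B := β / (α + β)
  have hshift : ∀ j ∈ range n,
      B ^ ((j + 1 + 1) * s - T (n - j - 1)) *
          (α + β) ^ (∑ q ∈ range (j + 1), T (n - q)) * (1 - β ^ T (n - j - 1)) =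
        B ^ s * (α + β) ^ T n * (B ^ ((j + 1) * s - T (n - j - 1)) *
          (α + β) ^ (∑ q ∈ range j, T (n - 1 - q)) * (1 - β ^ T (n - j - 1))) := by
    intro j _
    have hexp : (j + 1 + 1) * s - T (n - j - 1) = s + ((j + 1) * s - T (n - j - 1)) := by
      have hle : T (n - j - 1) ≤ (j + 1) * s := (hT _).trans (Nat.le_mul_of_pos_left s j.succ_pos)
      rw [add_mul _ 1, one_mul, add_comm _ s, Nat.add_sub_assoc hle]
    have hsum : ∑ q ∈ range (j + 1), T (n - q) = T n + ∑ q ∈ range j, T (n - 1 - q) := by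
      rw [sum_range_succ', add_comm]
      simp only [Nat.sub_zero, Nat.sub_add_eq, Nat.sub_right_comm n]
    rw [hexp, hsum, pow_add, pow_add]
    ring
  rw [recommendationWeight, recommendationWeight, sum_range_succ']
  simp only [Nat.add_sub_cancel, Nat.add_sub_add_right, Nat.sub_zero, zero_add, one_mul,
    sum_range_zero, pow_zero, mul_one]
  rw [sum_congr rfl hshift, ← mul_sum, ← div_add_pow_sub_mul_pow hZ (hT n)]
  ring

variable {clk : ℕ → ℕ} {x : ℕ → ℝ}

lemma opinion_block_step (hZ : α + β ≠ 0) (hβ : β ≠ 1) {j : ℕ} (hT : T j ≤ s)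
    (hclk : ∀ k, clk k = if k % s < T (k / s) then 1 else 0)
    (hdyn : ∀ k, x (k + 1) =
      if clk k = 1 then α * x₀ + β * x k + (1 - α - β) * u₀
      else α / (α + β) * x₀ + β / (α + β) * x k) :
    x ((j + 1) * s) = (β / (α + β)) ^ (s - T j) * (β ^ T j * x (j * s) +
        (1 - β ^ T j) * (α / (1 - β) * x₀ + (1 - α / (1 - β)) * u₀)) +
      (1 - (β / (α + β)) ^ (s - T j)) * x₀ := by
  have hclk_block : ∀ r < s, clk (j * s + r) = if r < T j then 1 else 0 := fun r hr => by
    rw [hclk, Nat.mul_add_mod_of_lt hr, Nat.mul_add_div_of_lt hr]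
  have hclicks : x (j * s + T j) = β ^ T j * x (j * s) +
      (1 - β ^ T j) * (α / (1 - β) * x₀ + (1 - α / (1 - β)) * u₀) := by
    refine affine_iterate fun r hr => ?_
    rw [hdyn, hclk_block r (by omega), if_pos hr, if_pos rfl]
    have : 1 - β ≠ 0 := sub_ne_zero.mpr hβ.symm
    field_simp
    ring
  have hidle : x (j * s + T j + (s - T j)) = (β / (α + β)) ^ (s - T j) * x (j * s + T j) +
      (1 - (β / (α + β)) ^ (s - T j)) * x₀ := by
    refine affine_iterate fun r hr => ?_
    have hno_click : ¬T j + r < T j := by omega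
    rw [hdyn, add_assoc, hclk_block (T j + r) (by omega), if_neg hno_click, if_neg zero_ne_one]
    field_simp
    ring
  rw [add_assoc, Nat.add_sub_cancel' hT, ← Nat.succ_mul, hclicks] at hidle
  exact hidle

theorem opinion_block_start (hZ : α + β ≠ 0) (hβ : β ≠ 1) (hT : ∀ j, T j ≤ s)
    (hclk : ∀ k, clk k = if k % s < T (k / s) then 1 else 0) (hx0 : x 0 = x₀)
    (hdyn : ∀ k, x (k + 1) =
      if clk k = 1 then α * x₀ + β * x k + (1 - α - β) * u₀
      else α / (α + β) * x₀ + β / (α + β) * x k) (n : ℕ) :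
    x (n * s) = (1 - recommendationWeight α β s T n) * x₀ +
      recommendationWeight α β s T n * u₀ := by
  induction n with
  | zero => simp [recommendationWeight, hx0]
  | succ n ih =>
    rw [opinion_block_step hZ hβ (hT n) hclk hdyn, ih, recommendationWeight_succ hZ hT]
    ring

end

theorem decreasing_policy_block_opinion_general
    (α β x₀ u₀ : ℝ) (hα : 0 < α) (hβ : 0 < β) (hαβ : α + β ≤ 1)
    (s T₀ κ : ℕ) (hT₀ : T₀ ≤ s)
    (clk : ℕ → ℕ) (hclk : ∀ k, clk k = if k % s < T₀ / κ ^ (k / s) then 1 else 0)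
    (x : ℕ → ℝ) (hx0 : x 0 = x₀)
    (hdyn : ∀ k, x (k + 1) =
      if clk k = 1 then α * x₀ + β * x k + (1 - α - β) * u₀
      else α / (α + β) * x₀ + β / (α + β) * x k)
    (i : ℕ) :
    x (i * s) =
      (1 - (1 - α / (1 - β)) * ∑ j ∈ Finset.range i,
          (β / (α + β)) ^ ((j + 1) * s - T₀ / κ ^ (i - j - 1)) *
            (α + β) ^ (∑ q ∈ Finset.range j, T₀ / κ ^ (i - 1 - q)) *
            (1 - β ^ (T₀ / κ ^ (i - j - 1)))) * x₀ +
      ((1 - α / (1 - β)) * ∑ j ∈ Finset.range i,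
          (β / (α + β)) ^ ((j + 1) * s - T₀ / κ ^ (i - j - 1)) *
            (α + β) ^ (∑ q ∈ Finset.range j, T₀ / κ ^ (i - 1 - q)) *
            (1 - β ^ (T₀ / κ ^ (i - j - 1)))) * u₀ :=
  opinion_block_start (T := fun j => T₀ / κ ^ j) (by positivity) (by linarith)
    (fun _ => (Nat.div_le_self _ _).trans hT₀) hclk hx0 hdyn i

/-- Under the decreasing clicking policy with block length `s`, initial clicking
number `T₀` and rate `κ` (block `j` clicks in its first `T₀ / κ^j` steps), for every block
index `i ≥ 1` with `κ^(i-1) ∣ T₀`, the opinion at the start of block `i` satisfies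
`x (i*s) = (1 - Υ) * x₀ + Υ * u₀` where
`Υ = (1 - η) * Σ_{j=0}^{i-1} B^((j+1)s - T₀/κ^(i-j-1)) * Z^(Σ_{q=0}^{j-1} T₀/κ^(i-1-q))
      * (1 - β^(T₀/κ^(i-j-1)))`. -/
theorem decreasing_policy_block_opinion
    (α β x₀ u₀ : ℝ) (hα : 0 < α) (hβ : 0 < β) (hαβ : α + β ≤ 1)
    (hx₀ : -1 ≤ x₀ ∧ x₀ ≤ 1) (hu₀ : -1 ≤ u₀ ∧ u₀ ≤ 1)
    (s T₀ κ : ℕ) (hs : 1 ≤ s) (hT₀ : T₀ ≤ s) (hκ : 2 ≤ κ)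
    (clk : ℕ → ℕ) (hclk : ∀ k, clk k = if k % s < T₀ / κ ^ (k / s) then 1 else 0)
    (x : ℕ → ℝ) (hx0 : x 0 = x₀)
    (hdyn : ∀ k, x (k + 1) =
      if clk k = 1 then α * x₀ + β * x k + (1 - α - β) * u₀
      else α / (α + β) * x₀ + β / (α + β) * x k)
    (i : ℕ) (hi : 1 ≤ i) (hdvd : κ ^ (i - 1) ∣ T₀) :
    x (i * s) =
      (1 - (1 - α / (1 - β)) * ∑ j ∈ Finset.range i,
          (β / (α + β)) ^ ((j + 1) * s - T₀ / κ ^ (i - j - 1)) *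
            (α + β) ^ (∑ q ∈ Finset.range j, T₀ / κ ^ (i - 1 - q)) *
            (1 - β ^ (T₀ / κ ^ (i - j - 1)))) * x₀ +
      ((1 - α / (1 - β)) * ∑ j ∈ Finset.range i,
          (β / (α + β)) ^ ((j + 1) * s - T₀ / κ ^ (i - j - 1)) *
            (α + β) ^ (∑ q ∈ Finset.range j, T₀ / κ ^ (i - 1 - q)) *
            (1 - β ^ (T₀ / κ ^ (i - j - 1)))) * u₀ :=
  decreasing_policy_block_opinion_general α β x₀ u₀ hα hβ hαβ s T₀ κ hT₀ clk hclk x hx0 hdyn i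
end

section
/- Under the adaptive decreasing clicking policy in its transient phase, where block j clicks during its first T₀ − j·τ steps, for every block index i ≥ 1 with (i−1)·τ ≤ T₀ the opinion at the start of block i satisfies x(i·s) = (1 − Υᵢ)·x₀ + Υᵢ·u₀, where Υᵢ = (1 − η) · Σ_{j=0}^{i−1} B^{(j+1)s − T₀ + (i−1−j)τ} · Z^{Σ_{q=0}^{j−1} (T₀ − (i−1−q)τ)} · (1 − β^{T₀ − (i−1−j)τ}). -/
/-!
Write the opinion as `lineMap x₀ u₀ y`, a point of the segment from `x₀` to `u₀`. A click step
is the relaxation `x ↦ β x + (1 - β) p` towards `p = lineMap x₀ u₀ (1 - η)`, a non-click step is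
the relaxation `x ↦ B x + (1 - B) x₀`, and relaxations act affinely on the weight `y`. Hence a
block with `T` clicks followed by `s - T` non-clicks maps `y` to
`B ^ (s - T) * (β ^ T * y + (1 - β ^ T) * (1 - η))`. Unrolling this over the blocks, the `j`-th
summand of `Υᵢ` is the contribution of block `i - 1 - j`, where `β = B Z` turns the factors
`B ^ (s - T) * β ^ T` of the later blocks into `B ^ s * Z ^ T`.
-/

open Finset AffineMap

theorem relaxation_iterate {x : ℕ → ℝ} {r p : ℝ} {a : ℕ} :
    ∀ {m : ℕ}, (∀ t < m, x (a + t + 1) = r * x (a + t) + (1 - r) * p) →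
      x (a + m) = r ^ m * x a + (1 - r ^ m) * p
  | 0, _ => by simp
  | m + 1, hstep => by
    rw [← add_assoc, hstep m m.lt_succ_self,
      relaxation_iterate fun t ht => hstep t (Nat.lt_succ_of_lt ht)]
    ring

theorem mul_lineMap_add_one_sub_mul_lineMap (x₀ u₀ r y c : ℝ) :
    r * lineMap x₀ u₀ y + (1 - r) * lineMap x₀ u₀ c = lineMap x₀ u₀ (r * y + (1 - r) * c) := by
  simp only [lineMap_apply_ring]
  ring

def OpinionDynamics (α β x₀ u₀ : ℝ) (clk : ℕ → ℕ) (x : ℕ → ℝ) : Prop :=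
  ∀ k, x (k + 1) =
    if clk k = 1 then α * x₀ + β * x k + (1 - α - β) * u₀
    else α / (α + β) * x₀ + β / (α + β) * x k

namespace OpinionDynamics

variable {α β x₀ u₀ : ℝ} {clk : ℕ → ℕ} {x : ℕ → ℝ}

theorem succ_of_click (hdyn : OpinionDynamics α β x₀ u₀ clk x) (hβ : β ≠ 1) {k : ℕ}
    (hk : clk k = 1) :
    x (k + 1) = β * x k + (1 - β) * lineMap x₀ u₀ (1 - α / (1 - β)) := by
  have : 1 - β ≠ 0 := sub_ne_zero.2 hβ.symm
  rw [hdyn k, if_pos hk, lineMap_apply_ring]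
  field_simp
  ring

theorem succ_of_not_click (hdyn : OpinionDynamics α β x₀ u₀ clk x) (hZ : α + β ≠ 0) {k : ℕ}
    (hk : clk k ≠ 1) :
    x (k + 1) = β / (α + β) * x k + (1 - β / (α + β)) * lineMap x₀ u₀ (0 : ℝ) := by
  rw [hdyn k, if_neg hk, lineMap_apply_zero]
  field_simp
  ring

theorem add_of_clicking_prefix (hdyn : OpinionDynamics α β x₀ u₀ clk x) (hβ : β ≠ 1)
    (hZ : α + β ≠ 0) {a n T : ℕ} (hT : T ≤ n) (hclk : ∀ t < n, clk (a + t) = 1 ↔ t < T)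
    {y : ℝ} (hxa : x a = lineMap x₀ u₀ y) :
    x (a + n) = lineMap x₀ u₀
      ((β / (α + β)) ^ (n - T) * (β ^ T * y + (1 - β ^ T) * (1 - α / (1 - β)))) := by
  have hclicks : x (a + T) = lineMap x₀ u₀ (β ^ T * y + (1 - β ^ T) * (1 - α / (1 - β))) := by
    rw [relaxation_iterate fun t ht => hdyn.succ_of_click hβ ((hclk t (by omega)).2 ht), hxa,
      mul_lineMap_add_one_sub_mul_lineMap]
  have hrest : x (a + T + (n - T)) = lineMap x₀ u₀
      ((β / (α + β)) ^ (n - T) * (β ^ T * y + (1 - β ^ T) * (1 - α / (1 - β)))) := by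
    refine (relaxation_iterate fun t ht => hdyn.succ_of_not_click hZ ?_).trans ?_
    · rw [add_assoc, Ne, hclk (T + t) (by omega)]
      omega
    · rw [hclicks, mul_lineMap_add_one_sub_mul_lineMap, mul_zero, add_zero]
  rwa [add_assoc, Nat.add_sub_cancel' hT] at hrest

end OpinionDynamics

theorem adaptiveDecreasing_clk_iff {s T₀ τ : ℕ} {clk : ℕ → ℕ}
    (hclk : ∀ k, clk k = if k % s < T₀ - (k / s) * τ then 1 else 0) (hs : 0 < s)
    (b : ℕ) {t : ℕ} (ht : t < s) : clk (b * s + t) = 1 ↔ t < T₀ - b * τ := by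
  rw [hclk, mul_comm, Nat.mul_add_mod, Nat.mod_eq_of_lt ht, Nat.mul_add_div hs,
    Nat.div_eq_of_lt ht, add_zero]
  split_ifs <;> simp_all

section TransientWeight

variable (α β : ℝ) (s T₀ τ : ℕ)

noncomputable def transientTerm (i j : ℕ) : ℝ :=
  (β / (α + β)) ^ ((j + 1) * s - T₀ + (i - 1 - j) * τ) *
    (α + β) ^ (∑ q ∈ range j, (T₀ - (i - 1 - q) * τ)) *
    (1 - β ^ (T₀ - (i - 1 - j) * τ))

noncomputable def transientWeight (i : ℕ) : ℝ :=
  ∑ j ∈ range i, transientTerm α β s T₀ τ i j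

variable {α β s T₀ τ}

theorem transientTerm_succ_succ (hZ : α + β ≠ 0) (hT₀ : T₀ ≤ s) (i j : ℕ) :
    transientTerm α β s T₀ τ (i + 1) (j + 1) =
      (β / (α + β)) ^ (s - (T₀ - i * τ)) * β ^ (T₀ - i * τ) * transientTerm α β s T₀ τ i j := by
  have hβpow : β ^ (T₀ - i * τ) = (β / (α + β)) ^ (T₀ - i * τ) * (α + β) ^ (T₀ - i * τ) := by
    rw [← mul_pow, div_mul_cancel₀ β hZ]
  have hidx : i + 1 - 1 - (j + 1) = i - 1 - j := by omega
  have hexp : (j + 1 + 1) * s - T₀ + (i - 1 - j) * τ =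
      (s - (T₀ - i * τ)) + (T₀ - i * τ) + ((j + 1) * s - T₀ + (i - 1 - j) * τ) := by
    have : s ≤ (j + 1) * s := Nat.le_mul_of_pos_left s j.succ_pos
    have : (j + 1 + 1) * s = (j + 1) * s + s := by ring
    omega
  have hsum : ∑ q ∈ range (j + 1), (T₀ - (i + 1 - 1 - q) * τ) =
      (T₀ - i * τ) + ∑ q ∈ range j, (T₀ - (i - 1 - q) * τ) := by
    rw [sum_range_succ', add_comm, Nat.add_sub_cancel, Nat.sub_zero]
    congr 1
    exact sum_congr rfl fun q _ => by rw [show i - (q + 1) = i - 1 - q by omega]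
  rw [transientTerm, transientTerm, hidx, hexp, hsum, hβpow, pow_add, pow_add, pow_add]
  ring

theorem transientTerm_succ_zero {i : ℕ} (hT₀ : T₀ ≤ s) (htr : i * τ ≤ T₀) :
    transientTerm α β s T₀ τ (i + 1) 0 =
      (β / (α + β)) ^ (s - (T₀ - i * τ)) * (1 - β ^ (T₀ - i * τ)) := by
  simp only [transientTerm, range_zero, sum_empty, pow_zero, mul_one, Nat.add_sub_cancel,
    Nat.sub_zero, zero_add, one_mul]
  rw [show s - T₀ + i * τ = s - (T₀ - i * τ) by omega]

theorem transientWeight_succ {i : ℕ} (hZ : α + β ≠ 0) (hT₀ : T₀ ≤ s) (htr : i * τ ≤ T₀) :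
    transientWeight α β s T₀ τ (i + 1) = (β / (α + β)) ^ (s - (T₀ - i * τ)) *
      (β ^ (T₀ - i * τ) * transientWeight α β s T₀ τ i + (1 - β ^ (T₀ - i * τ))) := by
  simp only [transientWeight, sum_range_succ', transientTerm_succ_succ hZ hT₀,
    transientTerm_succ_zero hT₀ htr, ← mul_sum]
  ring

end TransientWeight

theorem OpinionDynamics.block_start_of_adaptiveDecreasing {α β x₀ u₀ : ℝ} (hβ : β ≠ 1)
    (hZ : α + β ≠ 0) {s T₀ τ : ℕ} (hs : 0 < s) (hT₀ : T₀ ≤ s) {clk : ℕ → ℕ}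
    (hclk : ∀ k, clk k = if k % s < T₀ - (k / s) * τ then 1 else 0)
    {x : ℕ → ℝ} (hx0 : x 0 = x₀) (hdyn : OpinionDynamics α β x₀ u₀ clk x) :
    ∀ {i : ℕ}, (i - 1) * τ ≤ T₀ →
      x (i * s) = lineMap x₀ u₀ ((1 - α / (1 - β)) * transientWeight α β s T₀ τ i)
  | 0, _ => by simp [transientWeight, hx0]
  | i + 1, htr => by
    have htr' : i * τ ≤ T₀ := by simpa using htr
    have hprev : (i - 1) * τ ≤ T₀ := (Nat.mul_le_mul_right τ (Nat.sub_le i 1)).trans htr'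
    rw [add_one_mul, hdyn.add_of_clicking_prefix hβ hZ (by omega)
        (fun t ht => adaptiveDecreasing_clk_iff hclk hs i ht)
        (hdyn.block_start_of_adaptiveDecreasing hβ hZ hs hT₀ hclk hx0 hprev),
      transientWeight_succ hZ hT₀ htr']
    congr 1
    ring

theorem adaptive_decreasing_transient_block_opinion_general
    (α β x₀ u₀ : ℝ) (hα : 0 < α) (hβ : 0 < β) (hαβ : α + β ≤ 1)
    (s T₀ τ : ℕ) (hs : 1 ≤ s) (hT₀ : T₀ ≤ s)
    (clk : ℕ → ℕ) (hclk : ∀ k, clk k = if k % s < T₀ - (k / s) * τ then 1 else 0)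
    (x : ℕ → ℝ) (hx0 : x 0 = x₀)
    (hdyn : ∀ k, x (k + 1) =
      if clk k = 1 then α * x₀ + β * x k + (1 - α - β) * u₀
      else α / (α + β) * x₀ + β / (α + β) * x k)
    (i : ℕ) (htr : (i - 1) * τ ≤ T₀) :
    x (i * s) =
      (1 - (1 - α / (1 - β)) * ∑ j ∈ Finset.range i,
          (β / (α + β)) ^ ((j + 1) * s - T₀ + (i - 1 - j) * τ) *
            (α + β) ^ (∑ q ∈ Finset.range j, (T₀ - (i - 1 - q) * τ)) *
            (1 - β ^ (T₀ - (i - 1 - j) * τ))) * x₀ +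
      ((1 - α / (1 - β)) * ∑ j ∈ Finset.range i,
          (β / (α + β)) ^ ((j + 1) * s - T₀ + (i - 1 - j) * τ) *
            (α + β) ^ (∑ q ∈ Finset.range j, (T₀ - (i - 1 - q) * τ)) *
            (1 - β ^ (T₀ - (i - 1 - j) * τ))) * u₀ := by
  have hβ1 : β ≠ 1 := (show β < 1 by linarith).ne
  have hZ : α + β ≠ 0 := by positivity
  rw [OpinionDynamics.block_start_of_adaptiveDecreasing hβ1 hZ hs hT₀ hclk hx0 hdyn htr,
    lineMap_apply_ring]
  rfl

/-- Under the transient phase of the adaptive decreasing clicking policy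
(block `j` clicks in its first `T₀ - j*τ` steps), for every block index `i ≥ 1` with
`(i-1)*τ ≤ T₀`, the opinion at the start of block `i` satisfies
`x (i*s) = (1 - Υ) * x₀ + Υ * u₀` where
`Υ = (1 - η) * Σ_{j=0}^{i-1} B^((j+1)s - T₀ + (i-1-j)τ) * Z^(Σ_{q=0}^{j-1} (T₀ - (i-1-q)τ))
      * (1 - β^(T₀ - (i-1-j)τ))`. -/
theorem adaptive_decreasing_transient_block_opinion
    (α β x₀ u₀ : ℝ) (hα : 0 < α) (hβ : 0 < β) (hαβ : α + β ≤ 1)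
    (hx₀ : -1 ≤ x₀ ∧ x₀ ≤ 1) (hu₀ : -1 ≤ u₀ ∧ u₀ ≤ 1)
    (s T₀ τ : ℕ) (hs : 1 ≤ s) (hT₀ : T₀ ≤ s) (hτ : 1 ≤ τ)
    (clk : ℕ → ℕ) (hclk : ∀ k, clk k = if k % s < T₀ - (k / s) * τ then 1 else 0)
    (x : ℕ → ℝ) (hx0 : x 0 = x₀)
    (hdyn : ∀ k, x (k + 1) =
      if clk k = 1 then α * x₀ + β * x k + (1 - α - β) * u₀
      else α / (α + β) * x₀ + β / (α + β) * x k)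
    (i : ℕ) (hi : 1 ≤ i) (htr : (i - 1) * τ ≤ T₀) :
    x (i * s) =
      (1 - (1 - α / (1 - β)) * ∑ j ∈ Finset.range i,
          (β / (α + β)) ^ ((j + 1) * s - T₀ + (i - 1 - j) * τ) *
            (α + β) ^ (∑ q ∈ Finset.range j, (T₀ - (i - 1 - q) * τ)) *
            (1 - β ^ (T₀ - (i - 1 - j) * τ))) * x₀ +
      ((1 - α / (1 - β)) * ∑ j ∈ Finset.range i,
          (β / (α + β)) ^ ((j + 1) * s - T₀ + (i - 1 - j) * τ) *
            (α + β) ^ (∑ q ∈ Finset.range j, (T₀ - (i - 1 - q) * τ)) *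
            (1 - β ^ (T₀ - (i - 1 - j) * τ))) * u₀ :=
  adaptive_decreasing_transient_block_opinion_general α β x₀ u₀ hα hβ hαβ s T₀ τ hs hT₀ clk hclk x
    hx0 hdyn i htr
end

section
/- Suppose that from block m onward the agent clicks a fixed number T' of steps per block, i.e. clk(k) = 1 iff (k mod s) < T' for all k ≥ m·s, and suppose the opinion at the start of block m satisfies x(m·s) = (1 − Υₘ)·x₀ + Υₘ·u₀ for some real Υₘ. Then for every i ≥ m, x(i·s) = (1 − Υᵢ)·x₀ + Υᵢ·u₀, where Υᵢ = ((1 − (B^s Z^{T'})^{i−m})/(1 − B^s Z^{T'})) · (1 − η) · B^{s−T'} · (1 − β^{T'}) + (B^s Z^{T'})^{i−m} · Υₘ. -/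
/-!
Both updates map the line through `x₀` and `u₀` into itself, so the opinion stays of the form
`lineMap x₀ u₀ c` and only the coefficient `c` has to be tracked. A click acts on it as the affine
map `c ↦ β c + (1 - α - β)`, whose fixed point is `1 - η`, and a non-click as `c ↦ B c`. A block of
`T'` clicks followed by `s - T'` non-clicks therefore acts as the affine contraction
`c ↦ B^s Z^T' c + (1 - η) B^(s-T') (1 - β^T')`, and `Υᵢ` is its `(i - m)`-th iterate at `Υₘ`,
computed from its fixed point.
-/

open AffineMap

theorem eq_iterate_of_step {X Y : Type*} {y : ℕ → Y} {g : X → Y} {f : X → X} {k N : ℕ}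
    (hstep : ∀ n < N, ∀ c, y (k + n) = g c → y (k + n + 1) = g (f c))
    {c : X} (hc : y k = g c) : y (k + N) = g (f^[N] c) := by
  induction N with
  | zero => exact hc
  | succ N ih =>
    rw [← add_assoc, Function.iterate_succ_apply']
    exact hstep N N.lt_succ_self _ (ih fun n hn => hstep n (Nat.lt_succ_of_lt hn))

theorem affine_iterate_eq_of_fixedPoint {R : Type*} [CommRing R] {a b p : R}
    (hp : a * p + b = p) (n : ℕ) (c : R) :
    (fun c => a * c + b)^[n] c = a ^ n * c + (1 - a ^ n) * p := by
  induction n with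
  | zero => simp
  | succ n ih =>
    rw [Function.iterate_succ_apply', ih]
    linear_combination hp

section Opinion

variable {α β x₀ u₀ : ℝ} {clk : ℕ → ℕ} {x : ℕ → ℝ}

theorem opinion_succ_of_click
    (hdyn : ∀ k, x (k + 1) =
      if clk k = 1 then α * x₀ + β * x k + (1 - α - β) * u₀
      else α / (α + β) * x₀ + β / (α + β) * x k)
    {k : ℕ} (hk : clk k = 1) {c : ℝ} (hc : x k = lineMap x₀ u₀ c) :
    x (k + 1) = lineMap x₀ u₀ (β * c + (1 - α - β)) := by
  rw [hdyn, if_pos hk, hc, lineMap_apply_ring, lineMap_apply_ring]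
  ring

theorem opinion_succ_of_not_click
    (hdyn : ∀ k, x (k + 1) =
      if clk k = 1 then α * x₀ + β * x k + (1 - α - β) * u₀
      else α / (α + β) * x₀ + β / (α + β) * x k)
    (hZ : α + β ≠ 0) {k : ℕ} (hk : clk k ≠ 1) {c : ℝ} (hc : x k = lineMap x₀ u₀ c) :
    x (k + 1) = lineMap x₀ u₀ (β / (α + β) * c) := by
  rw [hdyn, if_neg hk, hc, lineMap_apply_ring, lineMap_apply_ring]
  field_simp
  ring

theorem opinion_add_block
    (hdyn : ∀ k, x (k + 1) =
      if clk k = 1 then α * x₀ + β * x k + (1 - α - β) * u₀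
      else α / (α + β) * x₀ + β / (α + β) * x k)
    (hZ : α + β ≠ 0) (hβ : 1 - β ≠ 0) {s T' : ℕ} (hT' : T' ≤ s) {k : ℕ}
    (hblk : ∀ n < s, clk (k + n) = if n < T' then 1 else 0)
    {c : ℝ} (hc : x k = lineMap x₀ u₀ c) :
    x (k + s) = lineMap x₀ u₀ ((β / (α + β)) ^ s * (α + β) ^ T' * c +
      (1 - α / (1 - β)) * (β / (α + β)) ^ (s - T') * (1 - β ^ T')) := by
  have hfix : β * (1 - α / (1 - β)) + (1 - α - β) = 1 - α / (1 - β) := by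
    field_simp
    ring
  have hclicks : x (k + T') = lineMap x₀ u₀ ((β * · + (1 - α - β))^[T'] c) :=
    eq_iterate_of_step (fun n hn _ hc' =>
      opinion_succ_of_click hdyn (by rw [hblk n (by omega), if_pos hn]) hc') hc
  have hrest : x (k + T' + (s - T')) =
      lineMap x₀ u₀ ((β / (α + β) * ·)^[s - T'] ((β * · + (1 - α - β))^[T'] c)) :=
    eq_iterate_of_step (fun n _ _ hc' => opinion_succ_of_not_click hdyn hZ
      (by rw [add_assoc, hblk (T' + n) (by omega), if_neg (by omega)]; simp) hc') hclicks
  rw [add_assoc, Nat.add_sub_cancel' hT', mul_left_iterate_apply,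
    affine_iterate_eq_of_fixedPoint hfix] at hrest
  have hpow : (β / (α + β)) ^ (s - T') * β ^ T' = (β / (α + β)) ^ s * (α + β) ^ T' := by
    obtain ⟨d, rfl⟩ := Nat.exists_eq_add_of_le hT'
    rw [Nat.add_sub_cancel_left, add_comm T' d, pow_add, mul_assoc, ← mul_pow,
      div_mul_cancel₀ β hZ]
  rw [hrest]
  congr 1
  linear_combination c * hpow

end Opinion

theorem block_factor_lt_one {α β : ℝ} (hα : 0 < α) (hβ : 0 < β) (hαβ : α + β ≤ 1)
    {s : ℕ} (hs : 1 ≤ s) (T' : ℕ) : (β / (α + β)) ^ s * (α + β) ^ T' < 1 :=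
  calc (β / (α + β)) ^ s * (α + β) ^ T' ≤ (β / (α + β)) ^ s * 1 := by
        gcongr
        exact pow_le_one₀ (by positivity) hαβ
    _ < 1 := by
        rw [mul_one]
        exact pow_lt_one₀ (by positivity) ((div_lt_one (by positivity)).2 (by linarith))
          (by omega)

theorem adaptive_decreasing_steady_state_block_opinion_general
    (α β x₀ u₀ : ℝ) (hα : 0 < α) (hβ : 0 < β) (hαβ : α + β ≤ 1)
    (s T' m : ℕ) (hs : 1 ≤ s) (hT' : T' ≤ s)
    (clk : ℕ → ℕ) (hclk : ∀ k, m * s ≤ k → clk k = if k % s < T' then 1 else 0)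
    (x : ℕ → ℝ)
    (hdyn : ∀ k, x (k + 1) =
      if clk k = 1 then α * x₀ + β * x k + (1 - α - β) * u₀
      else α / (α + β) * x₀ + β / (α + β) * x k)
    (Υₘ : ℝ) (hxm : x (m * s) = (1 - Υₘ) * x₀ + Υₘ * u₀) :
    ∀ i : ℕ, m ≤ i →
      x (i * s) =
        (1 - ((1 - ((β / (α + β)) ^ s * (α + β) ^ T') ^ (i - m)) /
            (1 - (β / (α + β)) ^ s * (α + β) ^ T') *
            (1 - α / (1 - β)) * (β / (α + β)) ^ (s - T') * (1 - β ^ T') +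
            ((β / (α + β)) ^ s * (α + β) ^ T') ^ (i - m) * Υₘ)) * x₀ +
        ((1 - ((β / (α + β)) ^ s * (α + β) ^ T') ^ (i - m)) /
            (1 - (β / (α + β)) ^ s * (α + β) ^ T') *
            (1 - α / (1 - β)) * (β / (α + β)) ^ (s - T') * (1 - β ^ T') +
            ((β / (α + β)) ^ s * (α + β) ^ T') ^ (i - m) * Υₘ) * u₀ := by
  have hZ : α + β ≠ 0 := by positivity
  have hβ1 : 1 - β ≠ 0 := by linarith
  set q := (β / (α + β)) ^ s * (α + β) ^ T'
  set K := (1 - α / (1 - β)) * (β / (α + β)) ^ (s - T') * (1 - β ^ T') with hK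
  have hq : 1 - q ≠ 0 := (sub_pos.2 (block_factor_lt_one hα hβ hαβ hs T')).ne'
  have hfix : q * (K / (1 - q)) + K = K / (1 - q) := by
    field_simp
    ring
  have hblk : ∀ i ≥ m, ∀ l < s, clk (i * s + l) = if l < T' then 1 else 0 := fun i hi l hl => by
    rw [hclk _ (by nlinarith), Nat.add_comm, Nat.add_mul_mod_self_right, Nat.mod_eq_of_lt hl]
  intro i hi
  obtain ⟨n, rfl⟩ := Nat.exists_eq_add_of_le hi
  have hblocks : x ((m + n) * s) = lineMap x₀ u₀ ((q * · + K)^[n] Υₘ) :=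
    eq_iterate_of_step (y := fun j => x (j * s)) (fun j _ _ hc => by
      simpa only [add_mul, one_mul] using
        opinion_add_block hdyn hZ hβ1 hT' (hblk (m + j) (by omega)) hc)
      (by rwa [lineMap_apply_ring])
  rw [hblocks, affine_iterate_eq_of_fixedPoint hfix, lineMap_apply_ring, Nat.add_sub_cancel_left,
    hK]
  ring

/-- steady-state phase of the adaptive decreasing policy: Suppose from block `m`
onward the agent clicks a fixed number `T'` of steps per block, and
`x (m*s) = (1 - Υₘ) * x₀ + Υₘ * u₀`.  Then for every `i ≥ m`,
`x (i*s) = (1 - Υᵢ) * x₀ + Υᵢ * u₀`, where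
`Υᵢ = ((1 - (B^s Z^T')^(i-m)) / (1 - B^s Z^T')) * (1 - η) * B^(s-T') * (1 - β^T')
      + (B^s Z^T')^(i-m) * Υₘ`. -/
theorem adaptive_decreasing_steady_state_block_opinion
    (α β x₀ u₀ : ℝ) (hα : 0 < α) (hβ : 0 < β) (hαβ : α + β ≤ 1)
    (hx₀ : -1 ≤ x₀ ∧ x₀ ≤ 1) (hu₀ : -1 ≤ u₀ ∧ u₀ ≤ 1)
    (s T' m : ℕ) (hs : 1 ≤ s) (hT' : T' ≤ s)
    (clk : ℕ → ℕ) (hclk : ∀ k, m * s ≤ k → clk k = if k % s < T' then 1 else 0)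
    (hclk01 : ∀ k, clk k = 0 ∨ clk k = 1)
    (x : ℕ → ℝ) (hx0 : x 0 = x₀)
    (hdyn : ∀ k, x (k + 1) =
      if clk k = 1 then α * x₀ + β * x k + (1 - α - β) * u₀
      else α / (α + β) * x₀ + β / (α + β) * x k)
    (Υₘ : ℝ) (hxm : x (m * s) = (1 - Υₘ) * x₀ + Υₘ * u₀) :
    ∀ i : ℕ, m ≤ i →
      x (i * s) =
        (1 - ((1 - ((β / (α + β)) ^ s * (α + β) ^ T') ^ (i - m)) /
            (1 - (β / (α + β)) ^ s * (α + β) ^ T') *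
            (1 - α / (1 - β)) * (β / (α + β)) ^ (s - T') * (1 - β ^ T') +
            ((β / (α + β)) ^ s * (α + β) ^ T') ^ (i - m) * Υₘ)) * x₀ +
        ((1 - ((β / (α + β)) ^ s * (α + β) ^ T') ^ (i - m)) /
            (1 - (β / (α + β)) ^ s * (α + β) ^ T') *
            (1 - α / (1 - β)) * (β / (α + β)) ^ (s - T') * (1 - β ^ T') +
            ((β / (α + β)) ^ s * (α + β) ^ T') ^ (i - m) * Υₘ) * u₀ :=
  adaptive_decreasing_steady_state_block_opinion_general α β x₀ u₀ hα hβ hαβ s T' m hs hT' clk hclk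
    x hdyn Υₘ hxm
end

section
/- Fix β ∈ (0,1) and integers s ≥ 1, 1 ≤ T₀ ≤ s, i ≥ 1. For α ∈ (0, 1−β], define Υ(α) = ((1 − ((β/(α+β))^s (α+β)^{T₀})^i)/(1 − (β/(α+β))^s (α+β)^{T₀})) · (1 − α/(1−β)) · (β/(α+β))^{s−T₀} · (1 − β^{T₀}). Then Υ is strictly decreasing in α on (0, 1−β]: the influence of the recommendation under the fixed clicking policy decreases as the weight α of the innate opinion increases. -/
/-- For fixed `β ∈ (0,1)`, `s ≥ 1`, `1 ≤ T₀ ≤ s`, `i ≥ 1`, the weight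
`Υ(α) = ((1 - ((β/(α+β))^s (α+β)^T₀)^i) / (1 - (β/(α+β))^s (α+β)^T₀)) * (1 - α/(1-β))
        * (β/(α+β))^(s-T₀) * (1 - β^T₀)`
of the recommendation under the fixed clicking policy is strictly decreasing in `α`
on `(0, 1-β]`. -/
theorem fixed_policy_weight_strictAnti_in_alpha
    (β : ℝ) (hβ0 : 0 < β) (hβ1 : β < 1)
    (s T₀ i : ℕ) (hs : 1 ≤ s) (hT₀1 : 1 ≤ T₀) (hT₀s : T₀ ≤ s) (hi : 1 ≤ i) :
    StrictAntiOn (fun α : ℝ =>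
        (1 - ((β / (α + β)) ^ s * (α + β) ^ T₀) ^ i) /
          (1 - (β / (α + β)) ^ s * (α + β) ^ T₀) *
          (1 - α / (1 - β)) * (β / (α + β)) ^ (s - T₀) * (1 - β ^ T₀))
      (Set.Ioc 0 (1 - β)) := by
  intro a ha b hb hab
  obtain ⟨ha0, ha1⟩ := ha
  obtain ⟨hb0, hb1⟩ := hb
  dsimp only
  have hβ' : (0:ℝ) < 1 - β := by linarith
  have hZa : (0:ℝ) < a + β := by linarith
  have hZb : (0:ℝ) < b + β := by linarith
  -- key algebraic identity
  have key : ∀ Z : ℝ, 0 < Z → (β / Z) ^ s * Z ^ T₀ = β ^ s / Z ^ (s - T₀) := by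
    intro Z hZ
    rw [div_pow, div_mul_eq_mul_div, div_eq_div_iff (by positivity) (by positivity)]
    rw [mul_assoc, ← pow_add]
    congr 2
    omega
  have hpowβ : β ^ s / β ^ (s - T₀) = β ^ T₀ := by
    rw [eq_comm, eq_div_iff (by positivity), ← pow_add]
    congr 1
    omega
  set qa := (β / (a + β)) ^ s * (a + β) ^ T₀ with hqadef
  set qb := (β / (b + β)) ^ s * (b + β) ^ T₀ with hqbdef
  have hqa0 : 0 < qa := by rw [hqadef]; positivity
  have hqb0 : 0 < qb := by rw [hqbdef]; positivity
  have hqaT : qa ≤ β ^ T₀ := by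
    rw [hqadef, key _ hZa, ← hpowβ]
    apply div_le_div_of_nonneg_left (by positivity) (by positivity)
    exact pow_le_pow_left₀ hβ0.le (by linarith) _
  have hqbT : qb ≤ β ^ T₀ := by
    rw [hqbdef, key _ hZb, ← hpowβ]
    apply div_le_div_of_nonneg_left (by positivity) (by positivity)
    exact pow_le_pow_left₀ hβ0.le (by linarith) _
  have hβT1 : β ^ T₀ < 1 := pow_lt_one₀ hβ0.le hβ1 (by omega)
  have hqa1 : qa < 1 := lt_of_le_of_lt hqaT hβT1
  have hqb1 : qb < 1 := lt_of_le_of_lt hqbT hβT1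
  have hqle : qb ≤ qa := by
    rw [hqadef, hqbdef, key _ hZa, key _ hZb]
    apply div_le_div_of_nonneg_left (by positivity) (by positivity)
    exact pow_le_pow_left₀ hZa.le (by linarith) _
  -- geometric sum rewrite
  have hgeom : ∀ q : ℝ, q < 1 →
      (1 - q ^ i) / (1 - q) = ∑ j ∈ Finset.range i, q ^ j := by
    intro q hq
    rw [geom_sum_eq hq.ne]
    rw [div_eq_div_iff (by linarith) (by linarith)]
    ring
  rw [hgeom qa hqa1, hgeom qb hqb1]
  set Sa := ∑ j ∈ Finset.range i, qa ^ j with hSadef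
  set Sb := ∑ j ∈ Finset.range i, qb ^ j with hSbdef
  have hSa_pos : 0 < Sa :=
    Finset.sum_pos (fun j _ => pow_pos hqa0 j) (Finset.nonempty_range_iff.mpr (by omega))
  have hSb_nonneg : 0 ≤ Sb :=
    Finset.sum_nonneg fun j _ => pow_nonneg hqb0.le j
  have hS_le : Sb ≤ Sa :=
    Finset.sum_le_sum fun j _ => pow_le_pow_left₀ hqb0.le hqle j
  -- factor 2
  have hf2b : 0 ≤ 1 - b / (1 - β) := by
    rw [sub_nonneg, div_le_one hβ']; linarith
  have hf2a : 0 < 1 - a / (1 - β) := by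
    rw [sub_pos, div_lt_one hβ']; linarith
  have hf2lt : 1 - b / (1 - β) < 1 - a / (1 - β) := by
    have : a / (1 - β) < b / (1 - β) := by gcongr
    linarith
  -- factor 3
  have hf3a : 0 < (β / (a + β)) ^ (s - T₀) := by positivity
  have hf3b : 0 ≤ (β / (b + β)) ^ (s - T₀) := by positivity
  have hf3le : (β / (b + β)) ^ (s - T₀) ≤ (β / (a + β)) ^ (s - T₀) := by
    apply pow_le_pow_left₀ (by positivity)
    apply div_le_div_of_nonneg_left hβ0.le hZa (by linarith)
  have hc : 0 < 1 - β ^ T₀ := by linarith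
  apply mul_lt_mul_of_pos_right _ hc
  calc Sb * (1 - b / (1 - β)) * (β / (b + β)) ^ (s - T₀)
      ≤ Sa * (1 - b / (1 - β)) * (β / (a + β)) ^ (s - T₀) := by
        apply mul_le_mul (mul_le_mul_of_nonneg_right hS_le hf2b) hf3le hf3b
        positivity
    _ < Sa * (1 - a / (1 - β)) * (β / (a + β)) ^ (s - T₀) := by
        apply mul_lt_mul_of_pos_right _ hf3a
        exact mul_lt_mul_of_pos_left hf2lt hSa_pos
end

section
/- Fix β ∈ (0,1) and integers s ≥ 1, κ ≥ 2, i ≥ 1, and T₀ with 1 ≤ T₀ ≤ s and κ^{i−1} dividing T₀; set T_j = T₀/κ^j for 0 ≤ j ≤ i−1. For α ∈ (0, 1−β], define Υ(α) = (1 − α/(1−β)) · Σ_{j=0}^{i−1} (β/(α+β))^{(j+1)s − T_{i−j−1}} · (α+β)^{Σ_{q=0}^{j−1} T_{i−1−q}} · (1 − β^{T_{i−j−1}}). Then Υ is strictly decreasing in α on (0, 1−β]: the influence of the recommendation under the decreasing clicking policy (in transient blocks) decreases as α increases. -/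
/-!
Write `Υ(α) = L(α) · S(α)` with `L(α) = 1 - α/(1-β)`. The linear factor is strictly decreasing and
nonnegative on `(0, 1-β]`. In each summand of `S`, the exponent of `(α+β)` is at most that of
`β/(α+β)` (all `T_j ≤ s`), so the summand is `β^E · c / (α+β)^(E-M)` with `E ≥ M` and `c ≥ 0`,
hence nonincreasing in `α`. The summand `j = i-1` has `c = 1 - β^{T₀} > 0`, so `S > 0`, and a
strictly decreasing nonnegative factor times a positive nonincreasing one is strictly decreasing.
-/

open Finset Set

lemma StrictAntiOn.mul_antitoneOn {α R : Type*} [Preorder α] [Mul R] [Zero R] [Preorder R]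
    [PosMulMono R] [MulPosStrictMono R] {s : Set α} {f g : α → R} (hf : StrictAntiOn f s)
    (hg : AntitoneOn g s) (hf₀ : ∀ x ∈ s, 0 ≤ f x) (hg₀ : ∀ x ∈ s, 0 < g x) :
    StrictAntiOn (fun x => f x * g x) s := fun a ha b hb hab =>
  calc f b * g b ≤ f b * g a := mul_le_mul_of_nonneg_left (hg ha hb hab.le) (hf₀ b hb)
    _ < f a * g a := mul_lt_mul_of_pos_right (hf ha hb hab) (hg₀ a ha)

lemma antitoneOn_div_pow_mul_pow {b : ℝ} (hb : 0 ≤ b) {m n : ℕ} (hmn : m ≤ n) :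
    AntitoneOn (fun z : ℝ => (b / z) ^ n * z ^ m) (Ioi 0) := by
  intro x hx y hy hxy
  have hx : 0 < x := hx
  have hy : 0 < y := hy
  have hform : ∀ z : ℝ, 0 < z → (b / z) ^ n * z ^ m = b ^ n / z ^ (n - m) := fun z hz => by
    rw [div_pow, pow_sub₀ z hz.ne' hmn]
    field_simp
  simp only [hform x hx, hform y hy]
  gcongr

lemma antitoneOn_sum_div_add_pow_mul_add_pow {ι : Type*} (I : Finset ι) {β : ℝ} (hβ : 0 ≤ β)
    {E M : ι → ℕ} {c : ι → ℝ} (hME : ∀ j ∈ I, M j ≤ E j) (hc : ∀ j ∈ I, 0 ≤ c j) :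
    AntitoneOn (fun α : ℝ => ∑ j ∈ I, (β / (α + β)) ^ E j * (α + β) ^ M j * c j)
      (Ioi (-β)) := by
  refine AntitoneOn.finsetSum fun j hj x hx y hy hxy => ?_
  have hx : 0 < x + β := by linarith [show -β < x from hx]
  have hy : 0 < y + β := by linarith [show -β < y from hy]
  exact mul_le_mul_of_nonneg_right
    (antitoneOn_div_pow_mul_pow hβ (hME j hj) hx hy (by linarith)) (hc j hj)

lemma sum_range_le_succ_mul_sub {a : ℕ → ℕ} {b s : ℕ} (j : ℕ) (ha : ∀ q, a q ≤ s) (hb : b ≤ s) :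
    ∑ q ∈ range j, a q ≤ (j + 1) * s - b := by
  have hsum : ∑ q ∈ range j, a q ≤ j * s := by
    simpa using sum_le_card_nsmul (range j) a s fun q _ => ha q
  rw [add_one_mul]
  omega

theorem decreasing_policy_weight_strictAnti_in_alpha_general
    (β : ℝ) (hβ0 : 0 < β) (hβ1 : β < 1)
    (s κ i T₀ : ℕ) (hi : 1 ≤ i)
    (hT₀1 : 1 ≤ T₀) (hT₀s : T₀ ≤ s) :
    StrictAntiOn (fun α : ℝ =>
        (1 - α / (1 - β)) * ∑ j ∈ Finset.range i,
          (β / (α + β)) ^ ((j + 1) * s - T₀ / κ ^ (i - j - 1)) *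
            (α + β) ^ (∑ q ∈ Finset.range j, T₀ / κ ^ (i - 1 - q)) *
            (1 - β ^ (T₀ / κ ^ (i - j - 1))))
      (Set.Ioc 0 (1 - β)) := by
  have hβ' : 0 < 1 - β := by linarith
  have hT : ∀ k, T₀ / κ ^ k ≤ s := fun k => (Nat.div_le_self _ _).trans hT₀s
  have hc : ∀ j, 0 ≤ 1 - β ^ (T₀ / κ ^ (i - j - 1)) := fun j =>
    sub_nonneg.2 (pow_le_one₀ hβ0.le hβ1.le)
  refine StrictAntiOn.mul_antitoneOn ?_ ?_ ?_ ?_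
  · intro a _ b _ hab
    have := div_lt_div_of_pos_right hab hβ'
    linarith
  · refine (antitoneOn_sum_div_add_pow_mul_add_pow _ hβ0.le
      (fun j _ => sum_range_le_succ_mul_sub j (fun q => hT _) (hT _)) fun j _ => hc j).mono ?_
    exact fun α hα => show -β < α by linarith [hα.1]
  · intro α hα
    linarith [(div_le_one hβ').2 hα.2]
  · intro α hα
    have hαβ : 0 < α + β := by linarith [hα.1]
    refine sum_pos' (fun j _ => mul_nonneg (by positivity) (hc j))
      ⟨i - 1, mem_range.2 (by omega), ?_⟩
    have hlast : i - (i - 1) - 1 = 0 := by omega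
    rw [hlast, pow_zero, Nat.div_one]
    exact mul_pos (by positivity) (sub_pos.2 (pow_lt_one₀ hβ0.le hβ1 (by omega)))

/-- For fixed `β ∈ (0,1)`, `s ≥ 1`, `κ ≥ 2`, `i ≥ 1`, `1 ≤ T₀ ≤ s` with
`κ^(i-1) ∣ T₀`, the weight
`Υ(α) = (1 - α/(1-β)) * Σ_{j=0}^{i-1} (β/(α+β))^((j+1)s - T₀/κ^(i-j-1))
          * (α+β)^(Σ_{q=0}^{j-1} T₀/κ^(i-1-q)) * (1 - β^(T₀/κ^(i-j-1)))`
of the recommendation under the decreasing clicking policy (transient blocks) is strictly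
decreasing in `α` on `(0, 1-β]`. -/
theorem decreasing_policy_weight_strictAnti_in_alpha
    (β : ℝ) (hβ0 : 0 < β) (hβ1 : β < 1)
    (s κ i T₀ : ℕ) (hs : 1 ≤ s) (hκ : 2 ≤ κ) (hi : 1 ≤ i)
    (hT₀1 : 1 ≤ T₀) (hT₀s : T₀ ≤ s) (hdvd : κ ^ (i - 1) ∣ T₀) :
    StrictAntiOn (fun α : ℝ =>
        (1 - α / (1 - β)) * ∑ j ∈ Finset.range i,
          (β / (α + β)) ^ ((j + 1) * s - T₀ / κ ^ (i - j - 1)) *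
            (α + β) ^ (∑ q ∈ Finset.range j, T₀ / κ ^ (i - 1 - q)) *
            (1 - β ^ (T₀ / κ ^ (i - j - 1))))
      (Set.Ioc 0 (1 - β)) :=
  decreasing_policy_weight_strictAnti_in_alpha_general β hβ0 hβ1 s κ i T₀ hi hT₀1 hT₀s
end

section
/- Fix β ∈ (0,1) and integers s ≥ 1, τ ≥ 1, i ≥ 1, and T₀ with T₀ ≤ s and T₀ − (i−1)τ ≥ 1. For α ∈ (0, 1−β], define Υ(α) = (1 − α/(1−β)) · Σ_{j=0}^{i−1} (β/(α+β))^{(j+1)s − T₀ + (i−1−j)τ} · (α+β)^{Σ_{q=0}^{j−1} (T₀ − (i−1−q)τ)} · (1 − β^{T₀ − (i−1−j)τ}). Then Υ is strictly decreasing in α on (0, 1−β]: the influence of the recommendation under the adaptive decreasing clicking policy (in transient blocks) decreases as α increases. -/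
/-- For fixed `β ∈ (0,1)`, `s ≥ 1`, `τ ≥ 1`, `i ≥ 1`, `T₀ ≤ s` with
`T₀ - (i-1)τ ≥ 1`, the weight
`Υ(α) = (1 - α/(1-β)) * Σ_{j=0}^{i-1} (β/(α+β))^((j+1)s - T₀ + (i-1-j)τ)
          * (α+β)^(Σ_{q=0}^{j-1} (T₀ - (i-1-q)τ)) * (1 - β^(T₀ - (i-1-j)τ))`
of the recommendation under the adaptive decreasing clicking policy (transient blocks) is
strictly decreasing in `α` on `(0, 1-β]`. -/
theorem adaptive_decreasing_weight_strictAnti_in_alpha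
    (β : ℝ) (hβ0 : 0 < β) (hβ1 : β < 1)
    (s τ i T₀ : ℕ) (hs : 1 ≤ s) (hτ : 1 ≤ τ) (hi : 1 ≤ i)
    (hT₀s : T₀ ≤ s) (htr : 1 ≤ T₀ - (i - 1) * τ) :
    StrictAntiOn (fun α : ℝ =>
        (1 - α / (1 - β)) * ∑ j ∈ Finset.range i,
          (β / (α + β)) ^ ((j + 1) * s - T₀ + (i - 1 - j) * τ) *
            (α + β) ^ (∑ q ∈ Finset.range j, (T₀ - (i - 1 - q) * τ)) *
            (1 - β ^ (T₀ - (i - 1 - j) * τ)))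
      (Set.Ioc 0 (1 - β)) := by
  have h1β : (0:ℝ) < 1 - β := by linarith
  intro a ha b hb hab
  simp only [Set.mem_Ioc] at ha hb
  -- expressions for the sums
  set A : ℕ → ℕ := fun j => (j + 1) * s - T₀ + (i - 1 - j) * τ with hA
  set B : ℕ → ℕ := fun j => ∑ q ∈ Finset.range j, (T₀ - (i - 1 - q) * τ) with hBdef
  have hC : ∀ j, 1 ≤ T₀ - (i - 1 - j) * τ := by
    intro j
    have : (i - 1 - j) * τ ≤ (i - 1) * τ := Nat.mul_le_mul_right _ (Nat.sub_le _ _)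
    omega
  have hBA : ∀ j, B j ≤ A j := by
    intro j
    have hB1 : B j ≤ j * T₀ := by
      calc B j ≤ ∑ q ∈ Finset.range j, T₀ := Finset.sum_le_sum fun q _ => Nat.sub_le _ _
        _ = j * T₀ := by rw [Finset.sum_const, Finset.card_range, smul_eq_mul]
    have h1 : j * T₀ ≤ j * s := Nat.mul_le_mul_left j hT₀s
    have h2 : (j + 1) * s = j * s + s := by ring
    simp only [hA]
    omega
  have hc : ∀ j, 0 < 1 - β ^ (T₀ - (i - 1 - j) * τ) := by
    intro j
    have := pow_lt_one₀ hβ0.le hβ1 (by have := hC j; omega : T₀ - (i - 1 - j) * τ ≠ 0)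
    linarith
  -- key rewriting and monotonicity of each summand
  have key : ∀ j, (β / (b + β)) ^ A j * (b + β) ^ B j * (1 - β ^ (T₀ - (i - 1 - j) * τ))
      ≤ (β / (a + β)) ^ A j * (a + β) ^ B j * (1 - β ^ (T₀ - (i - 1 - j) * τ)) := by
    intro j
    obtain ⟨k, hk⟩ : ∃ k, A j = B j + k := ⟨A j - B j, by have := hBA j; omega⟩
    have hrw : ∀ x : ℝ, 0 < x → (β / (x + β)) ^ A j * (x + β) ^ B j = β ^ A j / (x + β) ^ k := by
      intro x hx
      have hxβ : (0:ℝ) < x + β := by linarith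
      rw [hk, div_pow, pow_add]
      field_simp
      ring
    have haβ : (0:ℝ) < a + β := by linarith [ha.1]
    have hbβ : (0:ℝ) < b + β := by linarith [ha.1]
    rw [hrw a ha.1, hrw b (lt_trans ha.1 hab)]
    have : β ^ A j / (b + β) ^ k ≤ β ^ A j / (a + β) ^ k := by
      gcongr <;> first | exact pow_nonneg hβ0.le _ | linarith
    exact mul_le_mul_of_nonneg_right this (hc j).le
  have hterm_nonneg : ∀ x : ℝ, 0 < x → ∀ j,
      0 ≤ (β / (x + β)) ^ A j * (x + β) ^ B j * (1 - β ^ (T₀ - (i - 1 - j) * τ)) := by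
    intro x hx j
    have hxβ : (0:ℝ) < x + β := by linarith
    exact mul_nonneg (mul_nonneg (by positivity) (by positivity)) (hc j).le
  have hsum_le : (∑ j ∈ Finset.range i,
        (β / (b + β)) ^ A j * (b + β) ^ B j * (1 - β ^ (T₀ - (i - 1 - j) * τ)))
      ≤ ∑ j ∈ Finset.range i,
        (β / (a + β)) ^ A j * (a + β) ^ B j * (1 - β ^ (T₀ - (i - 1 - j) * τ)) :=
    Finset.sum_le_sum fun j _ => key j
  have hsum_pos : 0 < ∑ j ∈ Finset.range i,
      (β / (a + β)) ^ A j * (a + β) ^ B j * (1 - β ^ (T₀ - (i - 1 - j) * τ)) := by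
    apply Finset.sum_pos' (fun j _ => hterm_nonneg a ha.1 j)
    refine ⟨0, Finset.mem_range.mpr (by omega), ?_⟩
    have haβ : (0:ℝ) < a + β := by linarith [ha.1]
    have := hc 0
    positivity
  have hfb : 0 ≤ 1 - b / (1 - β) := by
    rw [sub_nonneg, div_le_one h1β]; exact hb.2
  have hfab : 1 - b / (1 - β) < 1 - a / (1 - β) := by
    have : a / (1 - β) < b / (1 - β) := by gcongr
    linarith
  simp only
  calc (1 - b / (1 - β)) * ∑ j ∈ Finset.range i,
        (β / (b + β)) ^ A j * (b + β) ^ B j * (1 - β ^ (T₀ - (i - 1 - j) * τ))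
      ≤ (1 - b / (1 - β)) * ∑ j ∈ Finset.range i,
        (β / (a + β)) ^ A j * (a + β) ^ B j * (1 - β ^ (T₀ - (i - 1 - j) * τ)) :=
        mul_le_mul_of_nonneg_left hsum_le hfb
    _ < (1 - a / (1 - β)) * ∑ j ∈ Finset.range i,
        (β / (a + β)) ^ A j * (a + β) ^ B j * (1 - β ^ (T₀ - (i - 1 - j) * τ)) :=
        mul_lt_mul_of_pos_right hfab hsum_pos
end

section
/- Fix reals α, β with 0 < α, 0 < β, α + β < 1, and integers s ≥ 1 and i ≥ 1. For an integer T with 0 ≤ T ≤ s define Υᵢ(T) = ((1 − (B^s Z^T)^i)/(1 − B^s Z^T)) · (1 − η) · B^{s−T} · (1 − β^T). Then T ↦ Υᵢ(T) is strictly increasing on {0, 1, …, s}: under the fixed clicking policy, a higher clicking number per block amplifies the influence of the recommendation. -/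
open Finset

private noncomputable def qf (α β : ℝ) (s T : ℕ) : ℝ := β ^ T * (β / (α + β)) ^ (s - T)
private noncomputable def wf (α β : ℝ) (s T : ℕ) : ℝ :=
  (1 - α / (1 - β)) * (β / (α + β)) ^ (s - T) * (1 - β ^ T)
private noncomputable def Af (α β : ℝ) (s T : ℕ) : ℝ := 1 - qf α β s T - wf α β s T

private def Pfun (A q : ℝ) : ℕ → ℝ
  | 0 => 1
  | n + 1 => A + q * Pfun A q n

private lemma Pfun_eq (A q : ℝ) : ∀ n, 1 - Pfun A q n = (1 - q - A) * ∑ j ∈ Finset.range n, q ^ j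
  | 0 => by simp [Pfun]
  | n + 1 => by
    have ih := Pfun_eq A q n
    rw [geom_sum_succ]
    show 1 - (A + q * Pfun A q n) = _
    linear_combination q * ih

private lemma Pfun_ge (A q e : ℝ) (he : e ≤ 1)
    (hlow : ∀ p, e ≤ p → e ≤ A + q * p) : ∀ n, e ≤ Pfun A q n
  | 0 => he
  | n + 1 => hlow _ (Pfun_ge A q e he hlow n)

private lemma Pfun_le (A q A' q' e : ℝ) (he : e ≤ 1) (hq' : 0 ≤ q')
    (hlow : ∀ p, e ≤ p → e ≤ A + q * p)
    (hstep : ∀ p, e ≤ p → A' + q' * p ≤ A + q * p) :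
    ∀ n, Pfun A' q' n ≤ Pfun A q n
  | 0 => le_refl 1
  | n + 1 => by
    have h1 : Pfun A' q' n ≤ Pfun A q n := Pfun_le A q A' q' e he hq' hlow hstep n
    have h2 := Pfun_ge A q e he hlow n
    show A' + q' * Pfun A' q' n ≤ A + q * Pfun A q n
    calc A' + q' * Pfun A' q' n ≤ A' + q' * Pfun A q n := by nlinarith
      _ ≤ A + q * Pfun A q n := hstep _ h2

private lemma Pfun_lt (A q A' q' e : ℝ) (he : e ≤ 1) (hq' : 0 ≤ q')
    (hlow : ∀ p, e ≤ p → e ≤ A + q * p)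
    (hstep : ∀ p, e ≤ p → A' + q' * p < A + q * p) (n : ℕ) :
    Pfun A' q' (n + 1) < Pfun A q (n + 1) := by
  have hle := Pfun_le A q A' q' e he hq' hlow (fun p hp => le_of_lt (hstep p hp)) n
  have hge := Pfun_ge A q e he hlow n
  show A' + q' * Pfun A' q' n < A + q * Pfun A q n
  calc A' + q' * Pfun A' q' n ≤ A' + q' * Pfun A q n := by nlinarith
    _ < A + q * Pfun A q n := hstep _ hge

/-- For `0 < α`, `0 < β`, `α + β < 1`, `s ≥ 1`, `i ≥ 1`, the map
`T ↦ Υᵢ(T) = ((1 - (B^s Z^T)^i) / (1 - B^s Z^T)) * (1 - η) * B^(s-T) * (1 - β^T)` is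
strictly increasing on `{0, 1, …, s}`: under the fixed clicking policy, a higher clicking
number per block amplifies the influence of the recommendation. -/
theorem fixed_policy_weight_strictMono_in_T
    (α β : ℝ) (hα : 0 < α) (hβ : 0 < β) (hαβ : α + β < 1)
    (s i : ℕ) (hs : 1 ≤ s) (hi : 1 ≤ i)
    (Υ : ℕ → ℝ)
    (hΥ : ∀ T, Υ T =
      (1 - ((β / (α + β)) ^ s * (α + β) ^ T) ^ i) /
        (1 - (β / (α + β)) ^ s * (α + β) ^ T) *
        (1 - α / (1 - β)) * (β / (α + β)) ^ (s - T) * (1 - β ^ T)) :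
    ∀ T T' : ℕ, T < T' → T' ≤ s → Υ T < Υ T' := by
  have hZ : (0:ℝ) < α + β := by linarith
  have hβ1 : β < 1 := by linarith
  have h1β : (0:ℝ) < 1 - β := by linarith
  have hB0 : 0 < β / (α + β) := div_pos hβ hZ
  have hB1 : β / (α + β) < 1 := (div_lt_one hZ).2 (by linarith)
  have hβB : β < β / (α + β) := by
    rw [lt_div_iff₀ hZ]; nlinarith
  have hη1 : α / (1 - β) < 1 := (div_lt_one h1β).2 (by linarith)
  have hq_pos : ∀ T, 0 < qf α β s T := fun T =>
    mul_pos (pow_pos hβ T) (pow_pos hB0 _)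
  have hq_lt1 : ∀ T, T ≤ s → qf α β s T < 1 := by
    intro T hT
    unfold qf
    rcases Nat.eq_zero_or_pos T with h0 | h0
    · subst h0; simpa using pow_lt_one₀ (le_of_lt hB0) hB1 (by omega)
    · have h1 : β ^ T < 1 := pow_lt_one₀ (le_of_lt hβ) hβ1 (by omega)
      have h2 : (β / (α + β)) ^ (s - T) ≤ 1 := pow_le_one₀ (le_of_lt hB0) (le_of_lt hB1)
      nlinarith [pow_pos hβ T, pow_pos hB0 (s - T)]
  -- Υ in terms of Pfun
  have hΥP : ∀ T, T ≤ s → Υ T = 1 - Pfun (Af α β s T) (qf α β s T) i := by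
    intro T hT
    have hBZ : (β / (α + β)) ^ s * (α + β) ^ T = qf α β s T := by
      have h1 : (β / (α + β)) ^ (s - T) * (β / (α + β)) ^ T = (β / (α + β)) ^ s :=
        pow_sub_mul_pow _ hT
      have h2 : (β / (α + β)) * (α + β) = β := div_mul_cancel₀ _ (ne_of_gt hZ)
      calc (β / (α + β)) ^ s * (α + β) ^ T
          = (β / (α + β)) ^ (s - T) * ((β / (α + β)) * (α + β)) ^ T := by
            rw [← h1, mul_pow]; ring
        _ = qf α β s T := by rw [h2]; unfold qf; ring
    have hq1 : qf α β s T ≠ 1 := ne_of_lt (hq_lt1 T hT)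
    have hq1' : qf α β s T - 1 ≠ 0 := sub_ne_zero.2 hq1
    have hq1'' : (1:ℝ) - qf α β s T ≠ 0 := fun h => hq1' (by linarith [sub_eq_zero.1 h])
    have hw : 1 - qf α β s T - Af α β s T = wf α β s T := by unfold Af; ring
    rw [hΥ T, Pfun_eq, hBZ, geom_sum_eq hq1, hw]
    have hdiv : (1 - qf α β s T ^ i) / (1 - qf α β s T)
        = (qf α β s T ^ i - 1) / (qf α β s T - 1) := by
      rw [div_eq_div_iff hq1'' hq1']; ring
    rw [hdiv]
    unfold wf
    ring
  -- key identity
  have hkey : ∀ T, Af α β s T + qf α β s T * (α / (1 - β)) =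
      1 - (1 - α / (1 - β)) * (β / (α + β)) ^ (s - T) := by
    intro T; unfold Af wf qf; ring
  -- lower bound preservation
  have hlow : ∀ T, T ≤ s → ∀ p, α / (1 - β) ≤ p →
      α / (1 - β) ≤ Af α β s T + qf α β s T * p := by
    intro T hT p hp
    have hk := hkey T
    have hBle : (β / (α + β)) ^ (s - T) ≤ 1 := pow_le_one₀ (le_of_lt hB0) (le_of_lt hB1)
    have hqp := hq_pos T
    nlinarith
  -- strict step inequality
  have hstep : ∀ T, T + 1 ≤ s → ∀ p, α / (1 - β) ≤ p →
      Af α β s (T + 1) + qf α β s (T + 1) * p < Af α β s T + qf α β s T * p := by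
    intro T hT p hp
    have hst : s - T = (s - (T + 1)) + 1 := by omega
    have hBp : 0 < (β / (α + β)) ^ (s - (T + 1)) := pow_pos hB0 _
    have hq' : qf α β s (T + 1) < qf α β s T := by
      unfold qf
      rw [hst, pow_succ, pow_succ]
      have hβT : 0 < β ^ T := pow_pos hβ T
      nlinarith [mul_pos (mul_pos hβT hBp) (sub_pos.2 hβB)]
    have hBlt : (β / (α + β)) ^ (s - T) < (β / (α + β)) ^ (s - (T + 1)) := by
      rw [hst, pow_succ]
      nlinarith
    have hk1 := hkey T
    have hk2 := hkey (T + 1)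
    nlinarith
  -- single step for Υ
  have hΥstep : ∀ T, T + 1 ≤ s → Υ T < Υ (T + 1) := by
    intro T hT
    obtain ⟨n, rfl⟩ : ∃ n, i = n + 1 := ⟨i - 1, by omega⟩
    have hP := Pfun_lt (Af α β s T) (qf α β s T) (Af α β s (T + 1)) (qf α β s (T + 1))
      (α / (1 - β)) (le_of_lt hη1) (le_of_lt (hq_pos (T + 1)))
      (hlow T (by omega)) (hstep T hT) n
    rw [hΥP T (by omega), hΥP (T + 1) hT]
    linarith
  -- chain
  intro T T' h1 h2
  induction T' with
  | zero => omega
  | succ m ih =>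
    rcases Nat.lt_or_ge T m with hm | hm
    · exact lt_trans (ih hm (by omega)) (hΥstep m h2)
    · have : T = m := by omega
      subst this
      exact hΥstep T h2
end

section
/- Fix reals α, β with 0 < α, 0 < β, α + β ≤ 1, and integers s ≥ 1, i ≥ 1, and 1 ≤ T₀ ≤ s. For an integer κ ≥ 2 with κ^{i−1} dividing T₀, define Υᵢ(κ) = (1 − η) · Σ_{j=0}^{i−1} B^{(j+1)s − T₀/κ^{i−j−1}} · Z^{Σ_{q=0}^{j−1} T₀/κ^{i−1−q}} · (1 − β^{T₀/κ^{i−j−1}}). Then for integers 2 ≤ κ ≤ κ' such that both κ^{i−1} and κ'^{i−1} divide T₀, one has Υᵢ(κ') ≤ Υᵢ(κ): a faster decrease rate of the clicking period reduces the influence of the recommendation in transient blocks of the decreasing policy. -/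
/-- Auxiliary sum: the transient-block weight written with truncated-subtraction-safe
exponents, as a function of the sequence of clicking numbers `t`. -/
def SsumAux (B Z βr : ℝ) (s : ℕ) (t : ℕ → ℕ) (n : ℕ) : ℝ :=
  ∑ j ∈ Finset.range n,
    B ^ (j * s + (s - t j)) * Z ^ (∑ q ∈ Finset.range j, t q) * (1 - βr ^ t j)

lemma SsumAux_succ (B Z βr : ℝ) (s : ℕ) (t : ℕ → ℕ) (n : ℕ) :
    SsumAux B Z βr s t (n + 1) =
      B ^ (s - t 0) * (1 - βr ^ t 0)
        + B ^ s * Z ^ t 0 * SsumAux B Z βr s (fun j => t (j + 1)) n := by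
  simp only [SsumAux, Finset.mul_sum]
  rw [Finset.sum_range_succ']
  simp only [Nat.zero_mul, Nat.zero_add, Finset.range_zero, Finset.sum_empty, pow_zero, one_mul]
  have hsum : (∑ j ∈ Finset.range n,
        B ^ ((j + 1) * s + (s - t (j + 1))) * Z ^ (∑ q ∈ Finset.range (j + 1), t q) *
          (1 - βr ^ t (j + 1)))
      = ∑ j ∈ Finset.range n,
        B ^ s * Z ^ t 0 *
          (B ^ (j * s + (s - t (j + 1))) * Z ^ (∑ q ∈ Finset.range j, t (q + 1)) *
            (1 - βr ^ t (j + 1))) := by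
    refine Finset.sum_congr rfl fun j _ => ?_
    have e1 : (j + 1) * s + (s - t (j + 1)) = s + (j * s + (s - t (j + 1))) := by
      rw [add_one_mul]; ring
    have e2 : ∑ q ∈ Finset.range (j + 1), t q = t 0 + ∑ q ∈ Finset.range j, t (q + 1) := by
      rw [Finset.sum_range_succ']; ring
    rw [e1, e2, pow_add, pow_add]
    ring
  rw [hsum]
  ring

lemma SsumAux_le_one {B Z βr : ℝ} (hB0 : 0 ≤ B) (hB1 : B ≤ 1) (hZ0 : 0 ≤ Z)
    (hβ : βr = B * Z) (s : ℕ) :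
    ∀ n (t : ℕ → ℕ), (∀ j, t j ≤ s) → SsumAux B Z βr s t n ≤ 1 := by
  intro n
  induction n with
  | zero => intro t _; simp [SsumAux]
  | succ n ih =>
    intro t hts
    rw [SsumAux_succ]
    have hM : (0:ℝ) ≤ B ^ s * Z ^ t 0 := by positivity
    have hS := ih (fun j => t (j + 1)) (fun j => hts (j + 1))
    have ht0 : t 0 ≤ s := hts 0
    have hkey : B ^ s * Z ^ t 0 = B ^ (s - t 0) * βr ^ t 0 := by
      have : B ^ s = B ^ (s - t 0) * B ^ t 0 := by
        rw [← pow_add]; congr 1; omega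
      rw [this, hβ, mul_pow]; ring
    have h1 : B ^ (s - t 0) ≤ 1 := pow_le_one₀ hB0 hB1
    nlinarith [mul_le_mul_of_nonneg_left hS hM]

lemma SsumAux_mono {B Z βr : ℝ} (hB0 : 0 ≤ B) (hB1 : B ≤ 1) (hZ0 : 0 ≤ Z) (hZ1 : Z ≤ 1)
    (hβ : βr = B * Z) (s : ℕ) :
    ∀ n (t t' : ℕ → ℕ), (∀ j, t j ≤ s) → (∀ j, t' j ≤ t j) →
      SsumAux B Z βr s t' n ≤ SsumAux B Z βr s t n := by
  intro n
  induction n with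
  | zero => intro t t' _ _; simp [SsumAux]
  | succ n ih =>
    intro t t' hts ht't
    rw [SsumAux_succ, SsumAux_succ]
    have hts' : ∀ j, t' j ≤ s := fun j => le_trans (ht't j) (hts j)
    have hS' := ih (fun j => t (j + 1)) (fun j => t' (j + 1))
      (fun j => hts (j + 1)) (fun j => ht't (j + 1))
    have hS1 : SsumAux B Z βr s (fun j => t (j + 1)) n ≤ 1 :=
      SsumAux_le_one hB0 hB1 hZ0 hβ s n _ (fun j => hts (j + 1))
    set S := SsumAux B Z βr s (fun j => t (j + 1)) n with hSdef
    have hM' : (0:ℝ) ≤ B ^ s * Z ^ t' 0 := by positivity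
    -- identity: B^(s-T)*(1-βr^T) = B^(s-T) - B^s*Z^T  (for T ≤ s)
    have hid : ∀ T : ℕ, T ≤ s →
        B ^ (s - T) * (1 - βr ^ T) = B ^ (s - T) - B ^ s * Z ^ T := by
      intro T hT
      have : B ^ s = B ^ (s - T) * B ^ T := by rw [← pow_add]; congr 1; omega
      rw [this, hβ, mul_pow]; ring
    have hZpow : Z ^ t 0 ≤ Z ^ t' 0 := pow_le_pow_of_le_one hZ0 hZ1 (ht't 0)
    have hMM : B ^ s * Z ^ t 0 ≤ B ^ s * Z ^ t' 0 :=
      mul_le_mul_of_nonneg_left hZpow (by positivity)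
    have hBpow : B ^ (s - t' 0) ≤ B ^ (s - t 0) :=
      pow_le_pow_of_le_one hB0 hB1 (Nat.sub_le_sub_left (ht't 0) s)
    calc B ^ (s - t' 0) * (1 - βr ^ t' 0)
          + B ^ s * Z ^ t' 0 * SsumAux B Z βr s (fun j => t' (j + 1)) n
        ≤ B ^ (s - t' 0) * (1 - βr ^ t' 0) + B ^ s * Z ^ t' 0 * S :=
          by nlinarith [mul_le_mul_of_nonneg_left hS' hM']
      _ = B ^ (s - t' 0) - B ^ s * Z ^ t' 0 * (1 - S) := by
          rw [hid (t' 0) (hts' 0)]; ring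
      _ ≤ B ^ (s - t 0) - B ^ s * Z ^ t 0 * (1 - S) := by
          nlinarith [mul_le_mul_of_nonneg_right hMM (by linarith : (0:ℝ) ≤ 1 - S)]
      _ = B ^ (s - t 0) * (1 - βr ^ t 0) + B ^ s * Z ^ t 0 * S := by
          rw [hid (t 0) (hts 0)]; ring

/-- For `0 < α`, `0 < β`, `α + β ≤ 1`, `s ≥ 1`, `i ≥ 1`, `1 ≤ T₀ ≤ s`, the
transient-block weight of the decreasing policy,
`Υᵢ(κ) = (1 - η) * Σ_{j=0}^{i-1} B^((j+1)s - T₀/κ^(i-j-1))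
           * Z^(Σ_{q=0}^{j-1} T₀/κ^(i-1-q)) * (1 - β^(T₀/κ^(i-j-1)))`,
is antitone in the rate `κ`: for integers `2 ≤ κ ≤ κ'` with `κ^(i-1) ∣ T₀` and
`κ'^(i-1) ∣ T₀`, one has `Υᵢ(κ') ≤ Υᵢ(κ)`. -/
theorem decreasing_policy_weight_antitone_in_kappa
    (α β : ℝ) (hα : 0 < α) (hβ : 0 < β) (hαβ : α + β ≤ 1)
    (s i T₀ : ℕ) (hs : 1 ≤ s) (hi : 1 ≤ i) (hT₀1 : 1 ≤ T₀) (hT₀s : T₀ ≤ s)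
    (Υ : ℕ → ℝ)
    (hΥ : ∀ κ, Υ κ =
      (1 - α / (1 - β)) * ∑ j ∈ Finset.range i,
        (β / (α + β)) ^ ((j + 1) * s - T₀ / κ ^ (i - j - 1)) *
          (α + β) ^ (∑ q ∈ Finset.range j, T₀ / κ ^ (i - 1 - q)) *
          (1 - β ^ (T₀ / κ ^ (i - j - 1)))) :
    ∀ κ κ' : ℕ, 2 ≤ κ → κ ≤ κ' →
      κ ^ (i - 1) ∣ T₀ → κ' ^ (i - 1) ∣ T₀ → Υ κ' ≤ Υ κ := by
  intro κ κ' hκ2 hκκ' _ _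
  have hZpos : (0:ℝ) < α + β := by linarith
  have hB0 : (0:ℝ) ≤ β / (α + β) := by positivity
  have hB1 : β / (α + β) ≤ 1 := by
    rw [div_le_one hZpos]; linarith
  have hZ0 : (0:ℝ) ≤ α + β := le_of_lt hZpos
  have hβeq : β = (β / (α + β)) * (α + β) := (div_mul_cancel₀ β hZpos.ne').symm
  have hη : (0:ℝ) ≤ 1 - α / (1 - β) := by
    have h1β : (0:ℝ) < 1 - β := by linarith
    have : α / (1 - β) ≤ 1 := (div_le_one h1β).2 (by linarith)
    linarith
  -- convert the sums to SsumAux form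
  have hconv : ∀ κ₀ : ℕ, 0 < κ₀ →
      (∑ j ∈ Finset.range i,
        (β / (α + β)) ^ ((j + 1) * s - T₀ / κ₀ ^ (i - j - 1)) *
          (α + β) ^ (∑ q ∈ Finset.range j, T₀ / κ₀ ^ (i - 1 - q)) *
          (1 - β ^ (T₀ / κ₀ ^ (i - j - 1))))
      = SsumAux (β / (α + β)) (α + β) β s (fun j => T₀ / κ₀ ^ (i - 1 - j)) i := by
    intro κ₀ _
    simp only [SsumAux]
    refine Finset.sum_congr rfl fun j _ => ?_
    have h2 : i - j - 1 = i - 1 - j := by omega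
    rw [h2]
    have hle : T₀ / κ₀ ^ (i - 1 - j) ≤ s := le_trans (Nat.div_le_self _ _) hT₀s
    have h1 : (j + 1) * s - T₀ / κ₀ ^ (i - 1 - j)
        = j * s + (s - T₀ / κ₀ ^ (i - 1 - j)) := by
      rw [add_one_mul]
      generalize j * s = m
      omega
    rw [h1]
  rw [hΥ κ, hΥ κ', hconv κ (by omega), hconv κ' (by omega)]
  refine mul_le_mul_of_nonneg_left ?_ hη
  refine SsumAux_mono hB0 hB1 hZ0 hαβ hβeq s i _ _
    (fun j => le_trans (Nat.div_le_self _ _) hT₀s) (fun j => ?_)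
  exact Nat.div_le_div_left (Nat.pow_le_pow_left hκκ' _) (pow_pos (by omega) _)
end

section
/- Fix reals α, β with 0 < α, 0 < β, α + β ≤ 1, and integers s ≥ 1, i ≥ 1, and 1 ≤ T₀ ≤ s. For an integer τ ≥ 1 with (i−1)τ ≤ T₀, define Υᵢ(τ) = (1 − η) · Σ_{j=0}^{i−1} B^{(j+1)s − T₀ + (i−1−j)τ} · Z^{Σ_{q=0}^{j−1} (T₀ − (i−1−q)τ)} · (1 − β^{T₀ − (i−1−j)τ}). Then for integers 1 ≤ τ ≤ τ' with (i−1)τ' ≤ T₀, one has Υᵢ(τ') ≤ Υᵢ(τ): a larger clicking decrease number reduces the influence of the recommendation in transient blocks of the adaptive decreasing policy. -/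
/-- One block of the adaptive decreasing policy: `T` clicking steps then `s - T` silent steps. -/
noncomputable def advG (β B η : ℝ) (s T : ℕ) (w : ℝ) : ℝ :=
  B ^ (s - T) * (β ^ T * w + (1 - η) * (1 - β ^ T))

/-- Weight of the recommendation after `n` transient blocks. -/
noncomputable def advW (β B η : ℝ) (s T₀ τ : ℕ) : ℕ → ℝ
  | 0 => 0
  | n + 1 => advG β B η s (T₀ - n * τ) (advW β B η s T₀ τ n)

lemma advW_eq_sum (β B Z η : ℝ) (hBZ : β = B * Z) (s T₀ τ : ℕ) (hT₀s : T₀ ≤ s) :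
    ∀ n, (n - 1) * τ ≤ T₀ →
      advW β B η s T₀ τ n =
        (1 - η) * ∑ j ∈ Finset.range n,
          B ^ ((j + 1) * s - T₀ + (n - 1 - j) * τ) *
            Z ^ (∑ q ∈ Finset.range j, (T₀ - (n - 1 - q) * τ)) *
            (1 - β ^ (T₀ - (n - 1 - j) * τ)) := by
  intro n
  induction n with
  | zero => intro _; simp [advW]
  | succ n ih =>
    intro hn
    have hn' : n * τ ≤ T₀ := by simpa using hn
    have hprev : (n - 1) * τ ≤ T₀ :=
      le_trans (Nat.mul_le_mul_right τ (Nat.sub_le n 1)) hn'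
    have hIH := ih hprev
    set T : ℕ := T₀ - n * τ with hT
    have hTs : T ≤ s := le_trans (Nat.sub_le _ _) hT₀s
    rw [show advW β B η s T₀ τ (n + 1) = advG β B η s T (advW β B η s T₀ τ n) from rfl,
      hIH, advG]
    rw [Finset.sum_range_succ']
    have e1 : (0 + 1) * s = s := by ring
    have e2 : n + 1 - 1 - 0 = n := by omega
    have h0exp : (0 + 1) * s - T₀ + (n + 1 - 1 - 0) * τ = s - T := by
      rw [e1, e2]; omega
    have hshift : ∀ x ∈ Finset.range n,
        B ^ ((x + 1 + 1) * s - T₀ + (n + 1 - 1 - (x + 1)) * τ) *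
            Z ^ (∑ q ∈ Finset.range (x + 1), (T₀ - (n + 1 - 1 - q) * τ)) *
            (1 - β ^ (T₀ - (n + 1 - 1 - (x + 1)) * τ)) =
          B ^ (s - T) * β ^ T *
            (B ^ ((x + 1) * s - T₀ + (n - 1 - x) * τ) *
              Z ^ (∑ q ∈ Finset.range x, (T₀ - (n - 1 - q) * τ)) *
              (1 - β ^ (T₀ - (n - 1 - x) * τ))) := by
      intro x hx
      have hT₀x : T₀ ≤ (x + 1) * s :=
        le_trans hT₀s (Nat.le_mul_of_pos_left s (Nat.succ_pos x))
      have hmul : (x + 1 + 1) * s = s + (x + 1) * s := by ring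
      have hBexp : (x + 1 + 1) * s - T₀ + (n + 1 - 1 - (x + 1)) * τ =
          (s - T + T) + ((x + 1) * s - T₀ + (n - 1 - x) * τ) := by
        have h1 : n + 1 - 1 - (x + 1) = n - 1 - x := by omega
        have h2 : s - T + T = s := by omega
        rw [h1, h2]
        omega
      have hZexp : (∑ q ∈ Finset.range (x + 1), (T₀ - (n + 1 - 1 - q) * τ)) =
          T + ∑ q ∈ Finset.range x, (T₀ - (n - 1 - q) * τ) := by
        rw [Finset.sum_range_succ']
        have hq : ∀ q, T₀ - (n + 1 - 1 - (q + 1)) * τ = T₀ - (n - 1 - q) * τ := by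
          intro q
          have : n + 1 - 1 - (q + 1) = n - 1 - q := by omega
          rw [this]
        simp only [hq]
        have h0 : T₀ - (n + 1 - 1 - 0) * τ = T := by simp [hT]
        rw [h0, add_comm]
      have hβexp : (n + 1 - 1 - (x + 1)) = n - 1 - x := by omega
      rw [hBexp, hZexp, hβexp, pow_add, pow_add, hBZ, mul_pow]
      ring
    rw [Finset.sum_congr rfl hshift, h0exp]
    have e3 : T₀ - (n + 1 - 1 - 0) * τ = T := by rw [e2]
    rw [e3, ← Finset.mul_sum, Finset.sum_range_zero, pow_zero]
    ring

lemma advW_bounds (β B η : ℝ) (hβ0 : 0 ≤ β) (hβ1 : β ≤ 1) (hB0 : 0 ≤ B) (hB1 : B ≤ 1)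
    (hη : η ≤ 1) (s T₀ τ : ℕ) :
    ∀ n, 0 ≤ advW β B η s T₀ τ n ∧ advW β B η s T₀ τ n ≤ 1 - η := by
  intro n
  induction n with
  | zero => constructor <;> simp [advW] <;> linarith
  | succ n ih =>
    obtain ⟨h0, h1⟩ := ih
    rw [show advW β B η s T₀ τ (n + 1)
        = advG β B η s (T₀ - n * τ) (advW β B η s T₀ τ n) from rfl, advG]
    set T := T₀ - n * τ
    set w := advW β B η s T₀ τ n
    have hb0 : (0:ℝ) ≤ β ^ T := pow_nonneg hβ0 T
    have hb1 : β ^ T ≤ 1 := pow_le_one₀ hβ0 hβ1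
    have hB0' : (0:ℝ) ≤ B ^ (s - T) := pow_nonneg hB0 _
    have hB1' : B ^ (s - T) ≤ 1 := pow_le_one₀ hB0 hB1
    constructor
    · have : 0 ≤ β ^ T * w + (1 - η) * (1 - β ^ T) := by nlinarith
      exact mul_nonneg hB0' this
    · have hinner : β ^ T * w + (1 - η) * (1 - β ^ T) ≤ 1 - η := by nlinarith
      calc B ^ (s - T) * (β ^ T * w + (1 - η) * (1 - β ^ T))
          ≤ 1 * (1 - η) := by
            apply mul_le_mul hB1' hinner (by nlinarith) zero_le_one
        _ = 1 - η := one_mul _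

lemma advG_mono_w (β B η : ℝ) (hβ0 : 0 ≤ β) (hB0 : 0 ≤ B) (s T : ℕ)
    {w w' : ℝ} (h : w ≤ w') : advG β B η s T w ≤ advG β B η s T w' := by
  unfold advG
  apply mul_le_mul_of_nonneg_left _ (pow_nonneg hB0 _)
  have := mul_le_mul_of_nonneg_left h (pow_nonneg hβ0 T)
  linarith

lemma advG_mono_T (β B η : ℝ) (hβ0 : 0 ≤ β) (hβB : β ≤ B) (hB1 : B ≤ 1)
    (hη : η ≤ 1) (s : ℕ) {w : ℝ} (hw0 : 0 ≤ w) (hw1 : w ≤ 1 - η) :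
    ∀ T T' : ℕ, T ≤ T' → T' ≤ s → advG β B η s T w ≤ advG β B η s T' w := by
  have hB0 : (0:ℝ) ≤ B := le_trans hβ0 hβB
  have step : ∀ T : ℕ, T + 1 ≤ s → advG β B η s T w ≤ advG β B η s (T + 1) w := by
    intro T hTs
    unfold advG
    have hm : s - T = (s - (T + 1)) + 1 := by omega
    rw [hm, pow_succ, pow_succ]
    set b := β ^ T with hb
    have hb0 : (0:ℝ) ≤ b := pow_nonneg hβ0 T
    have hb1 : b ≤ 1 := pow_le_one₀ hβ0 (by linarith)
    have hinner : B * (b * w + (1 - η) * (1 - b)) ≤ b * β * w + (1 - η) * (1 - b * β) := by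
      nlinarith [mul_nonneg (mul_nonneg hb0 (sub_nonneg.2 hβB)) (sub_nonneg.2 hw1)]
    calc B ^ (s - (T + 1)) * B * (b * w + (1 - η) * (1 - b))
        = B ^ (s - (T + 1)) * (B * (b * w + (1 - η) * (1 - b))) := by ring
      _ ≤ B ^ (s - (T + 1)) * (b * β * w + (1 - η) * (1 - b * β)) :=
          mul_le_mul_of_nonneg_left hinner (pow_nonneg hB0 _)
      _ = B ^ (s - (T + 1)) * (β ^ T * β * w + (1 - η) * (1 - β ^ T * β)) := by rw [hb]
  intro T T' hTT' hT's
  induction T' with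
  | zero => simp_all
  | succ m ihm =>
    rcases Nat.lt_or_ge T (m + 1) with h | h
    · have hTm : T ≤ m := by omega
      exact le_trans (ihm hTm (by omega)) (step m hT's)
    · have : T = m + 1 := by omega
      subst this
      exact le_refl _

lemma advW_anti_tau (β B η : ℝ) (hβ0 : 0 ≤ β) (hβ1 : β ≤ 1) (hβB : β ≤ B) (hB1 : B ≤ 1)
    (hη : η ≤ 1) (s T₀ τ τ' : ℕ) (hττ' : τ ≤ τ') (hT₀s : T₀ ≤ s) :
    ∀ n, advW β B η s T₀ τ' n ≤ advW β B η s T₀ τ n := by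
  have hB0 : (0:ℝ) ≤ B := le_trans hβ0 hβB
  intro n
  induction n with
  | zero => simp [advW]
  | succ n ih =>
    rw [show advW β B η s T₀ τ' (n + 1)
        = advG β B η s (T₀ - n * τ') (advW β B η s T₀ τ' n) from rfl,
      show advW β B η s T₀ τ (n + 1)
        = advG β B η s (T₀ - n * τ) (advW β B η s T₀ τ n) from rfl]
    obtain ⟨hw0, hw1⟩ := advW_bounds β B η hβ0 hβ1 hB0 hB1 hη s T₀ τ' n
    have h1 : advG β B η s (T₀ - n * τ') (advW β B η s T₀ τ' n)
        ≤ advG β B η s (T₀ - n * τ) (advW β B η s T₀ τ' n) := by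
      apply advG_mono_T β B η hβ0 hβB hB1 hη s hw0 hw1
      · exact Nat.sub_le_sub_left (Nat.mul_le_mul_left n hττ') T₀
      · exact le_trans (Nat.sub_le _ _) hT₀s
    exact le_trans h1 (advG_mono_w β B η hβ0 hB0 s (T₀ - n * τ) ih)


/-- For `0 < α`, `0 < β`, `α + β ≤ 1`, `s ≥ 1`, `i ≥ 1`, `1 ≤ T₀ ≤ s`, the
transient-block weight of the adaptive decreasing policy,
`Υᵢ(τ) = (1 - η) * Σ_{j=0}^{i-1} B^((j+1)s - T₀ + (i-1-j)τ)
           * Z^(Σ_{q=0}^{j-1} (T₀ - (i-1-q)τ)) * (1 - β^(T₀ - (i-1-j)τ))`,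
is antitone in the decrease number `τ`: for integers `1 ≤ τ ≤ τ'` with `(i-1)τ' ≤ T₀`,
one has `Υᵢ(τ') ≤ Υᵢ(τ)`. -/
theorem adaptive_decreasing_weight_antitone_in_tau
    (α β : ℝ) (hα : 0 < α) (hβ : 0 < β) (hαβ : α + β ≤ 1)
    (s i T₀ : ℕ) (hs : 1 ≤ s) (hi : 1 ≤ i) (hT₀1 : 1 ≤ T₀) (hT₀s : T₀ ≤ s)
    (Υ : ℕ → ℝ)
    (hΥ : ∀ τ, Υ τ =
      (1 - α / (1 - β)) * ∑ j ∈ Finset.range i,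
        (β / (α + β)) ^ ((j + 1) * s - T₀ + (i - 1 - j) * τ) *
          (α + β) ^ (∑ q ∈ Finset.range j, (T₀ - (i - 1 - q) * τ)) *
          (1 - β ^ (T₀ - (i - 1 - j) * τ))) :
    ∀ τ τ' : ℕ, 1 ≤ τ → τ ≤ τ' → (i - 1) * τ' ≤ T₀ → Υ τ' ≤ Υ τ := by
  intro τ τ' hτ1 hττ' hτ'T₀
  have hZ0 : (0:ℝ) < α + β := by linarith
  have hβ1 : β < 1 := by linarith
  have hBZ : β = (β / (α + β)) * (α + β) := (div_mul_cancel₀ β (ne_of_gt hZ0)).symm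
  have hβB : β ≤ β / (α + β) := by
    rw [le_div_iff₀ hZ0]; nlinarith
  have hB1 : β / (α + β) ≤ 1 := (div_le_one hZ0).2 (by linarith)
  have hη : α / (1 - β) ≤ 1 := (div_le_one (by linarith)).2 (by linarith)
  have hτT₀ : (i - 1) * τ ≤ T₀ :=
    le_trans (Nat.mul_le_mul_left (i - 1) hττ') hτ'T₀
  rw [hΥ τ, hΥ τ',
    ← advW_eq_sum β (β / (α + β)) (α + β) (α / (1 - β)) hBZ s T₀ τ hT₀s i hτT₀,
    ← advW_eq_sum β (β / (α + β)) (α + β) (α / (1 - β)) hBZ s T₀ τ' hT₀s i hτ'T₀]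
  exact advW_anti_tau β (β / (α + β)) (α / (1 - β)) hβ.le hβ1.le hβB hB1 hη
    s T₀ τ τ' hττ' hT₀s i
end

section
/- Suppose that from block m onward the agent clicks a fixed number T' of steps per block (clk(k) = 1 iff (k mod s) < T' for all k ≥ m·s, with 0 ≤ T' ≤ s). Then the block-start opinions converge: lim_{i→∞} x(i·s) = x₀ + (u₀ − x₀)·C, where C = (1 − η)·B^{s−T'}·(1 − β^{T'})/(1 − B^s Z^{T'}) satisfies 0 ≤ C ≤ 1. Consequently, for a drift tolerance x_drift > 0, if x₀ < u₀ and |u₀ − x₀|·C ≤ x_drift, then x₀ ≤ lim_{i→∞} x(i·s) ≤ min{1, x₀ + x_drift}; and if u₀ ≤ x₀ and |u₀ − x₀|·C ≤ x_drift, then max{−1, x₀ − x_drift} ≤ lim_{i→∞} x(i·s) ≤ x₀. -/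
set_option maxHeartbeats 1600000 in
/-- If from block `m` onward the agent clicks a fixed number `T'` of steps per
block (steady-state phase of the adaptive decreasing policy), the block-start opinions
converge to `x₀ + (u₀ - x₀) * C`, where
`C = (1 - η) * B^(s-T') * (1 - β^T') / (1 - B^s Z^T')` satisfies `0 ≤ C ≤ 1`.
Consequently, for a drift tolerance `x_drift > 0`: if `x₀ < u₀` and `|u₀ - x₀| * C ≤ x_drift`
then `x₀ ≤ lim ≤ min 1 (x₀ + x_drift)`; and if `u₀ ≤ x₀` and `|u₀ - x₀| * C ≤ x_drift` then
`max (-1) (x₀ - x_drift) ≤ lim ≤ x₀`. -/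
theorem adaptive_decreasing_steady_state_limit
    (α β x₀ u₀ xdrift : ℝ) (hα : 0 < α) (hβ : 0 < β) (hαβ : α + β ≤ 1)
    (hx₀ : -1 ≤ x₀ ∧ x₀ ≤ 1) (hu₀ : -1 ≤ u₀ ∧ u₀ ≤ 1) (hdrift : 0 < xdrift)
    (s T' m : ℕ) (hs : 1 ≤ s) (hT' : T' ≤ s)
    (clk : ℕ → ℕ) (hclk : ∀ k, m * s ≤ k → clk k = if k % s < T' then 1 else 0)
    (hclk01 : ∀ k, clk k = 0 ∨ clk k = 1)
    (x : ℕ → ℝ) (hx0 : x 0 = x₀)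
    (hdyn : ∀ k, x (k + 1) =
      if clk k = 1 then α * x₀ + β * x k + (1 - α - β) * u₀
      else α / (α + β) * x₀ + β / (α + β) * x k)
    (C : ℝ)
    (hC : C = (1 - α / (1 - β)) * (β / (α + β)) ^ (s - T') * (1 - β ^ T') /
      (1 - (β / (α + β)) ^ s * (α + β) ^ T')) :
    (0 ≤ C ∧ C ≤ 1) ∧
    Filter.Tendsto (fun i : ℕ => x (i * s)) Filter.atTop
      (nhds (x₀ + (u₀ - x₀) * C)) ∧
    (x₀ < u₀ → |u₀ - x₀| * C ≤ xdrift →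
      x₀ ≤ x₀ + (u₀ - x₀) * C ∧ x₀ + (u₀ - x₀) * C ≤ min 1 (x₀ + xdrift)) ∧
    (u₀ ≤ x₀ → |u₀ - x₀| * C ≤ xdrift →
      max (-1) (x₀ - xdrift) ≤ x₀ + (u₀ - x₀) * C ∧ x₀ + (u₀ - x₀) * C ≤ x₀) := by
  obtain ⟨hx₀l, hx₀r⟩ := hx₀
  obtain ⟨hu₀l, hu₀r⟩ := hu₀
  have hZ0 : (0:ℝ) < α + β := by linarith
  have hβ1 : β < 1 := by linarith
  have h1β : (0:ℝ) < 1 - β := by linarith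
  set B : ℝ := β / (α + β) with hBdef
  have hB0 : 0 < B := div_pos hβ hZ0
  have hB1 : B < 1 := (div_lt_one hZ0).mpr (by linarith)
  set a : ℝ := B ^ (s - T') * β ^ T' with hadef
  have hBZ : B * (α + β) = β := div_mul_cancel₀ _ hZ0.ne'
  have haBsZ : B ^ s * (α + β) ^ T' = a := by
    have h1 : B ^ s = B ^ (s - T') * B ^ T' := by
      rw [← pow_add, Nat.sub_add_cancel hT']
    rw [h1, hadef, mul_assoc, ← mul_pow, hBZ]
  have ha0 : 0 < a := by positivity
  have ha1 : a < 1 := by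
    rw [← haBsZ]
    calc B ^ s * (α + β) ^ T' ≤ B ^ s * 1 := by
          exact mul_le_mul_of_nonneg_left (pow_le_one₀ hZ0.le hαβ)
            (pow_nonneg hB0.le s)
      _ = B ^ s := mul_one _
      _ < 1 := pow_lt_one₀ hB0.le hB1 (by omega)
  have hden : (0:ℝ) < 1 - B ^ s * (α + β) ^ T' := by rw [haBsZ]; linarith
  have hη1 : α / (1 - β) ≤ 1 := (div_le_one h1β).mpr (by linarith)
  have hη0 : 0 ≤ α / (1 - β) := by positivity
  have hβT1 : β ^ T' ≤ 1 := pow_le_one₀ hβ.le hβ1.le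
  have hβT0 : (0:ℝ) ≤ β ^ T' := by positivity
  have hBsT1 : B ^ (s - T') ≤ 1 := pow_le_one₀ hB0.le hB1.le
  have hBsT0 : (0:ℝ) < B ^ (s - T') := by positivity
  have hC0 : 0 ≤ C := by
    rw [hC]
    exact div_nonneg
      (mul_nonneg (mul_nonneg (by linarith) hBsT0.le) (by linarith)) hden.le
  have hC1 : C ≤ 1 := by
    rw [hC, div_le_one hden, haBsZ, hadef]
    nlinarith [mul_nonneg hη0 (mul_nonneg hBsT0.le (by linarith : (0:ℝ) ≤ 1 - β ^ T'))]
  set p : ℝ := (α * x₀ + (1 - (α + β)) * u₀) / (1 - β) with hpdef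
  have hp1 : α * x₀ + β * p + (1 - α - β) * u₀ = p := by
    rw [hpdef]; field_simp; ring
  set L : ℝ := x₀ + (u₀ - x₀) * C with hLdef
  -- in-block formula, clicking part
  have hA : ∀ (j : ℕ), j ≤ T' → ∀ i, m ≤ i →
      x (i * s + j) = p + β ^ j * (x (i * s) - p) := by
    intro j
    induction j with
    | zero => intro _ i _; simp
    | succ j ih =>
      intro hj i hi
      have hj' : j ≤ T' := by omega
      have hjs : j < s := by omega
      have hge : m * s ≤ i * s + j :=
        le_trans (Nat.mul_le_mul_right s hi) (Nat.le_add_right _ _)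
      have hmod : (i * s + j) % s = j := by
        rw [Nat.add_comm, Nat.add_mul_mod_self_right, Nat.mod_eq_of_lt hjs]
      have hclkj : clk (i * s + j) = 1 := by
        rw [hclk _ hge, hmod, if_pos (by omega)]
      have hstep := hdyn (i * s + j)
      rw [hclkj, if_pos rfl] at hstep
      have heq : i * s + (j + 1) = (i * s + j) + 1 := by omega
      rw [heq, hstep, ih hj' i hi]
      linear_combination hp1
  -- in-block formula, non-clicking part
  have hB2 : ∀ (d : ℕ), T' + d ≤ s → ∀ i, m ≤ i →
      x (i * s + (T' + d)) = x₀ + B ^ d * (x (i * s + T') - x₀) := by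
    intro d
    induction d with
    | zero => intro _ i _; simp
    | succ d ih =>
      intro hd i hi
      have hd' : T' + d ≤ s := by omega
      have hds : T' + d < s := by omega
      have hge : m * s ≤ i * s + (T' + d) :=
        le_trans (Nat.mul_le_mul_right s hi) (Nat.le_add_right _ _)
      have hmod : (i * s + (T' + d)) % s = T' + d := by
        rw [Nat.add_comm, Nat.add_mul_mod_self_right, Nat.mod_eq_of_lt hds]
      have hclkj : clk (i * s + (T' + d)) = 0 := by
        rw [hclk _ hge, hmod, if_neg (by omega)]
      have hstep := hdyn (i * s + (T' + d))
      rw [hclkj, if_neg (by omega)] at hstep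
      have heq : i * s + (T' + (d + 1)) = (i * s + (T' + d)) + 1 := by omega
      have hfix : α / (α + β) * x₀ + B * x₀ = x₀ := by
        rw [hBdef]; field_simp
      rw [heq, hstep, ih hd' i hi]
      linear_combination hfix
  -- block recurrence
  have hrec : ∀ i, m ≤ i →
      x ((i + 1) * s) = x₀ + B ^ (s - T') * (p + β ^ T' * (x (i * s) - p) - x₀) := by
    intro i hi
    have h1 : (i + 1) * s = i * s + (T' + (s - T')) := by
      have h2 : T' + (s - T') = s := by omega
      rw [h2, add_mul, one_mul]
    rw [h1, hB2 (s - T') (by omega) i hi, hA T' le_rfl i hi]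
  -- fixed point identity
  have hη : 1 - α / (1 - β) = (1 - (α + β)) / (1 - β) := by
    field_simp
    ring
  have hCeq : C * (1 - B ^ s * (α + β) ^ T') =
      (1 - α / (1 - β)) * B ^ (s - T') * (1 - β ^ T') := by
    rw [hC, div_mul_cancel₀ _ hden.ne']
  have hpL : p - x₀ = (1 - (α + β)) * (u₀ - x₀) / (1 - β) := by
    rw [hpdef]; field_simp; ring
  have key : (u₀ - x₀) * (C * (1 - B ^ (s - T') * β ^ T')) =
      B ^ (s - T') * (1 - β ^ T') * (p - x₀) := by
    rw [← hadef, ← haBsZ, hCeq, hpL, hη]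
    field_simp
  have hLfix : L = x₀ + B ^ (s - T') * (p + β ^ T' * (L - p) - x₀) := by
    rw [hLdef]
    linear_combination key
  have hrec' : ∀ i, m ≤ i → x ((i + 1) * s) - L = a * (x (i * s) - L) := by
    intro i hi
    rw [hadef]
    linear_combination hrec i hi - hLfix
  -- geometric convergence
  have hgeo : ∀ n : ℕ, x ((n + m) * s) = L + a ^ n * (x (m * s) - L) := by
    intro n
    induction n with
    | zero => simp
    | succ n ih =>
      have h1 := hrec' (n + m) (Nat.le_add_left m n)
      have h2 : n + 1 + m = (n + m) + 1 := by omega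
      rw [h2]
      linear_combination h1 + a * ih
  have htend : Filter.Tendsto (fun n : ℕ => x ((n + m) * s)) Filter.atTop (nhds L) := by
    have h1 : Filter.Tendsto (fun n : ℕ => a ^ n) Filter.atTop (nhds 0) :=
      tendsto_pow_atTop_nhds_zero_of_lt_one ha0.le ha1
    have h2 := (h1.mul_const (x (m * s) - L)).const_add L
    simp only [mul_zero, zero_mul, add_zero] at h2
    exact Filter.Tendsto.congr (fun n => (hgeo n).symm) h2
  refine ⟨⟨hC0, hC1⟩, ?_, ?_, ?_⟩
  · have := (Filter.tendsto_add_atTop_iff_nat (f := fun i : ℕ => x (i * s))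
      (l := nhds (x₀ + (u₀ - x₀) * C)) m).mp htend
    exact this
  · intro h1 h2
    rw [abs_of_pos (by linarith)] at h2
    constructor
    · nlinarith [mul_nonneg (by linarith : (0:ℝ) ≤ u₀ - x₀) hC0]
    · apply le_min
      · nlinarith [mul_nonneg (by linarith : (0:ℝ) ≤ u₀ - x₀) (by linarith : (0:ℝ) ≤ 1 - C)]
      · linarith
  · intro h1 h2
    rw [abs_of_nonpos (by linarith)] at h2
    constructor
    · apply max_le
      · nlinarith [mul_nonneg (by linarith : (0:ℝ) ≤ x₀ - u₀) (by linarith : (0:ℝ) ≤ 1 - C)]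
      · linarith
    · nlinarith [mul_nonneg (by linarith : (0:ℝ) ≤ x₀ - u₀) hC0]
end

section
/- Suppose the agent always clicks (clk(k) = 1 for all k) and the agent reward function is constant equal to 1. Then the agent's utility U(K) = λ·(1/K)·Σ_{k=0}^{K−1} clk(k) − (1−λ)·|x(K) − x₀| converges as K → ∞, with lim_{K→∞} U(K) = λ − (1−λ)·(1−η)·|u₀ − x₀|. In particular, if λ is small enough (the agent cares mostly about opinion drift) and u₀ ≠ x₀ with η < 1, the passive always-click policy yields negative long-run utility. -/
/-- If the agent always clicks and the reward function is constant `1`, then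
the utility `U lam K = lam * (1/K) * Σ_{k<K} clk k - (1-lam) * |x K - x₀|` converges as
`K → ∞` to `lam - (1-lam) * (1-η) * |u₀ - x₀|`.  In particular, if `u₀ ≠ x₀` and `η < 1`
(i.e. `α < 1 - β`), then for all small enough `lam` this long-run utility is negative. -/
theorem always_click_utility_limit
    (α β x₀ u₀ : ℝ) (hα : 0 < α) (hβ : 0 < β) (hαβ : α + β ≤ 1)
    (hx₀ : -1 ≤ x₀ ∧ x₀ ≤ 1) (hu₀ : -1 ≤ u₀ ∧ u₀ ≤ 1)
    (clk : ℕ → ℕ) (hclk : ∀ k, clk k = 1)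
    (x : ℕ → ℝ) (hx0 : x 0 = x₀)
    (hdyn : ∀ k, x (k + 1) = α * x₀ + β * x k + (1 - α - β) * u₀)
    (U : ℝ → ℕ → ℝ)
    (hU : ∀ lam K, U lam K =
      lam * (1 / (K : ℝ)) * ∑ k ∈ Finset.range K, (clk k : ℝ) -
        (1 - lam) * |x K - x₀|) :
    (∀ lam : ℝ, 0 ≤ lam → lam ≤ 1 →
      Filter.Tendsto (U lam) Filter.atTop
        (nhds (lam - (1 - lam) * (1 - α / (1 - β)) * |u₀ - x₀|))) ∧
    (u₀ ≠ x₀ → α < 1 - β →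
      ∃ lam₀ : ℝ, 0 < lam₀ ∧ ∀ lam : ℝ, 0 ≤ lam → lam < lam₀ →
        lam - (1 - lam) * (1 - α / (1 - β)) * |u₀ - x₀| < 0) := by
  have hβ1 : β < 1 := by linarith
  have hβne : (1 : ℝ) - β ≠ 0 := by linarith
  have hη : α / (1 - β) ≤ 1 := by
    rw [div_le_one (by linarith)]; linarith
  have hxform : ∀ K, x K - x₀ = (1 - β ^ K) * ((1 - α / (1 - β)) * (u₀ - x₀)) := by
    intro K
    induction K with
    | zero => simp [hx0]
    | succ n ih =>
      have hxn : x n = x₀ + (1 - β ^ n) * ((1 - α / (1 - β)) * (u₀ - x₀)) := by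
        linarith [ih]
      rw [hdyn, hxn]
      field_simp
      ring
  have habs : ∀ K, |x K - x₀| = (1 - β ^ K) * ((1 - α / (1 - β)) * |u₀ - x₀|) := by
    intro K
    rw [hxform, abs_mul, abs_mul]
    have h1 : (0:ℝ) ≤ 1 - β ^ K := by
      have := pow_le_one₀ hβ.le hβ1.le (n := K); linarith
    have h2 : (0:ℝ) ≤ 1 - α / (1 - β) := by linarith
    rw [abs_of_nonneg h1, abs_of_nonneg h2]
  constructor
  · intro lam hl0 hl1
    set c : ℝ := (1 - lam) * ((1 - α / (1 - β)) * |u₀ - x₀|) with hc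
    have hpow : Filter.Tendsto (fun K : ℕ => (β : ℝ) ^ K) Filter.atTop (nhds 0) :=
      tendsto_pow_atTop_nhds_zero_of_lt_one hβ.le hβ1
    have hlim : Filter.Tendsto (fun K : ℕ => (lam - c) + c * β ^ K) Filter.atTop
        (nhds ((lam - c) + c * 0)) :=
      Filter.Tendsto.add tendsto_const_nhds (hpow.const_mul c)
    have hgoal : (lam - c) + c * 0 = lam - (1 - lam) * (1 - α / (1 - β)) * |u₀ - x₀| := by
      rw [hc]; ring
    rw [← hgoal]
    apply hlim.congr'
    filter_upwards [Filter.eventually_ge_atTop 1] with K hK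
    have hKne : (K : ℝ) ≠ 0 := Nat.cast_ne_zero.mpr (by omega)
    rw [hU, habs]
    have hsum : ∑ k ∈ Finset.range K, (clk k : ℝ) = (K : ℝ) := by
      simp [hclk]
    rw [hsum]
    have h1 : lam * (1 / (K : ℝ)) * (K : ℝ) = lam := by field_simp
    rw [h1, hc]
    ring
  · intro hne hab
    have hc : 0 < (1 - α / (1 - β)) * |u₀ - x₀| := by
      apply mul_pos
      · have : α / (1 - β) < 1 := by rw [div_lt_one (by linarith)]; linarith
        linarith
      · exact abs_pos.mpr (sub_ne_zero.mpr hne)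
    set c := (1 - α / (1 - β)) * |u₀ - x₀| with hcdef
    refine ⟨c / (1 + c), div_pos hc (by linarith), fun lam hl0 hl => ?_⟩
    have h1c : (0:ℝ) < 1 + c := by linarith
    have hl' : lam * (1 + c) < c := (lt_div_iff₀ h1c).mp hl
    have : lam - (1 - lam) * c < 0 := by nlinarith
    calc lam - (1 - lam) * (1 - α / (1 - β)) * |u₀ - x₀|
        = lam - (1 - lam) * c := by rw [hcdef]; ring
      _ < 0 := this
end

section
/- Fix an integer s ≥ 2 and suppose the agent clicks exactly the first s−1 steps of every block (clk(k) = 1 iff (k mod s) < s−1 for all k), with agent reward function constant equal to 1. Let ε₁ = B·(1 − β^{s−1})/(1 − B·β^{s−1}). Then the block-end utilities converge: lim_{n→∞} U(n·s) = λ·(s−1)/s − (1−λ)·(1−η)·|u₀ − x₀|·ε₁, where U(K) = λ·(1/K)·Σ_{k=0}^{K−1} clk(k) − (1−λ)·|x(K) − x₀|. Moreover, if 0 < λ < 1, (1−η)·|u₀ − x₀| > 0, and ε₁ < 1 − (λ/s)/((1−λ)·(1−η)·|u₀ − x₀|), then this limit is strictly greater than λ − (1−λ)·(1−η)·|u₀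 − x₀|, the long-run utility of the passive always-click policy; so an adaptive reactive policy can strictly outperform the passive policy. -/
/-- Suppose `s ≥ 2` and the agent clicks exactly the first `s-1` steps of every
block, with reward function constant `1`.  With `ε₁ = B (1 - β^(s-1)) / (1 - B β^(s-1))`,
the block-end utilities converge:
`U (n*s) → lam * (s-1)/s - (1-lam) * (1-η) * |u₀ - x₀| * ε₁` as `n → ∞`.
Moreover, if `0 < lam < 1`, `(1-η) * |u₀ - x₀| > 0` and
`ε₁ < 1 - (lam/s) / ((1-lam) * (1-η) * |u₀ - x₀|)`, then this limit strictly exceeds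
`lam - (1-lam) * (1-η) * |u₀ - x₀|`, the long-run utility of the passive always-click
policy: an adaptive reactive policy can strictly outperform the passive policy. -/
theorem reactive_policy_outperforms_passive
    (α β x₀ u₀ lam : ℝ) (hα : 0 < α) (hβ : 0 < β) (hαβ : α + β ≤ 1)
    (hx₀ : -1 ≤ x₀ ∧ x₀ ≤ 1) (hu₀ : -1 ≤ u₀ ∧ u₀ ≤ 1)
    (hlam : 0 ≤ lam ∧ lam ≤ 1)
    (s : ℕ) (hs : 2 ≤ s)
    (clk : ℕ → ℕ) (hclk : ∀ k, clk k = if k % s < s - 1 then 1 else 0)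
    (x : ℕ → ℝ) (hx0 : x 0 = x₀)
    (hdyn : ∀ k, x (k + 1) =
      if clk k = 1 then α * x₀ + β * x k + (1 - α - β) * u₀
      else α / (α + β) * x₀ + β / (α + β) * x k)
    (U : ℕ → ℝ)
    (hU : ∀ K, U K =
      lam * (1 / (K : ℝ)) * ∑ k ∈ Finset.range K, (clk k : ℝ) -
        (1 - lam) * |x K - x₀|)
    (ε₁ : ℝ)
    (hε₁ : ε₁ = (β / (α + β)) * (1 - β ^ (s - 1)) /
      (1 - (β / (α + β)) * β ^ (s - 1))) :
    Filter.Tendsto (fun n : ℕ => U (n * s)) Filter.atTop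
      (nhds (lam * ((s : ℝ) - 1) / s -
        (1 - lam) * (1 - α / (1 - β)) * |u₀ - x₀| * ε₁)) ∧
    (0 < lam → lam < 1 → 0 < (1 - α / (1 - β)) * |u₀ - x₀| →
      ε₁ < 1 - (lam / s) / ((1 - lam) * (1 - α / (1 - β)) * |u₀ - x₀|) →
      lam - (1 - lam) * (1 - α / (1 - β)) * |u₀ - x₀| <
        lam * ((s : ℝ) - 1) / s -
          (1 - lam) * (1 - α / (1 - β)) * |u₀ - x₀| * ε₁) := by
  have hβ1 : β < 1 := by linarith
  have hZ : 0 < α + β := by linarith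
  have hZ' : (α + β) ≠ 0 := ne_of_gt hZ
  have h1β : (1:ℝ) - β ≠ 0 := by intro h; linarith
  set η : ℝ := α / (1 - β) with hηdef
  set B : ℝ := β / (α + β) with hBdef
  have hB0 : 0 < B := div_pos hβ hZ
  have hB1 : B < 1 := (div_lt_one hZ).2 (by linarith)
  have hβs1 : β ^ (s-1) < 1 := pow_lt_one₀ hβ.le hβ1 (by omega)
  have hβs0 : 0 < β ^ (s-1) := pow_pos hβ _
  set q : ℝ := B * β ^ (s-1) with hqdef
  have hq0 : 0 < q := mul_pos hB0 hβs0
  have hq1 : q < 1 := by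
    calc q = B * β ^ (s-1) := rfl
    _ < 1 * 1 := by
        apply mul_lt_mul' hB1.le hβs1 hβs0.le one_pos
    _ = 1 := by ring
  have hη1 : η ≤ 1 := by
    rw [hηdef, div_le_one (by linarith)]; linarith
  have hkey : (1 - η) * (1 - β) = 1 - α - β := by
    rw [hηdef]; field_simp; ring
  -- clicks within a block
  have hmod : ∀ n j, j < s → (n * s + j) % s = j := by
    intro n j hj
    rw [mul_comm, Nat.mul_add_mod, Nat.mod_eq_of_lt hj]
  have hclk1 : ∀ n j, j < s - 1 → clk (n * s + j) = 1 := by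
    intro n j hj
    rw [hclk, hmod n j (by omega), if_pos hj]
  have hclk0 : ∀ n, clk (n * s + (s-1)) = 0 := by
    intro n
    rw [hclk, hmod n (s-1) (by omega), if_neg (by omega)]
  -- in-block evolution
  have hblock : ∀ n j, j ≤ s - 1 →
      x (n * s + j) - x₀ = β ^ j * (x (n*s) - x₀)
        + (1 - β^j) * ((1 - η) * (u₀ - x₀)) := by
    intro n j hj
    induction j with
    | zero => simp
    | succ j ih =>
      have h1 := hdyn (n*s + j)
      rw [hclk1 n j (by omega), if_pos rfl] at h1
      have h2 := ih (by omega)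
      rw [show n*s + (j+1) = (n*s + j) + 1 from rfl, h1]
      have h2' : x (n*s + j) = x₀ + β ^ j * (x (n*s) - x₀)
          + (1 - β^j) * ((1 - η) * (u₀ - x₀)) := by linarith
      rw [h2', pow_succ]
      linear_combination (x₀ - u₀) * hkey
  -- block-end recurrence
  have hstep : ∀ n, x ((n+1) * s) - x₀ = q * (x (n*s) - x₀)
      + B * (1 - β^(s-1)) * ((1 - η) * (u₀ - x₀)) := by
    intro n
    have hidx : (n+1) * s = (n*s + (s-1)) + 1 := by
      have : s - 1 + 1 = s := by omega
      calc (n+1)*s = n*s + s := by ring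
      _ = (n*s + (s-1)) + 1 := by omega
    have h1 := hdyn (n*s + (s-1))
    rw [hclk0 n, if_neg (by omega)] at h1
    rw [hidx, h1]
    have h2 := hblock n (s-1) le_rfl
    have h2' : x (n*s + (s-1)) = x₀ + β ^ (s-1) * (x (n*s) - x₀)
        + (1 - β^(s-1)) * ((1 - η) * (u₀ - x₀)) := by linarith
    rw [h2', hqdef, hBdef]
    field_simp
    ring
  -- closed form
  set L : ℝ := ε₁ * ((1 - η) * (u₀ - x₀)) with hLdef
  have hq1' : (1:ℝ) - q ≠ 0 := by intro h; linarith
  have hLq : B * (1 - β^(s-1)) * ((1 - η) * (u₀ - x₀)) = L * (1 - q) := by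
    rw [hLdef, hε₁]
    field_simp
  have hy : ∀ n, x (n * s) - x₀ = L * (1 - q ^ n) := by
    intro n
    induction n with
    | zero => simp [hx0]
    | succ n ih =>
      rw [hstep n, ih, hLq, pow_succ]
      ring
  -- click sum
  have hsum : ∀ n : ℕ, ∑ k ∈ Finset.range (n * s), (clk k : ℝ)
      = (n : ℝ) * ((s : ℝ) - 1) := by
    intro n
    induction n with
    | zero => simp
    | succ n ih =>
      have : (n+1) * s = n * s + s := by ring
      rw [this, Finset.sum_range_add, ih]
      have hblocksum : ∑ j ∈ Finset.range s, (clk (n * s + j) : ℝ)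
          = (s : ℝ) - 1 := by
        have hcongr : ∀ j ∈ Finset.range s, (clk (n * s + j) : ℝ)
            = if j < s - 1 then 1 else 0 := by
          intro j hj
          rw [hclk, hmod n j (Finset.mem_range.mp hj)]
          split <;> norm_num
        rw [Finset.sum_congr rfl hcongr, Finset.sum_boole]
        have hfil : Finset.filter (fun j => j < s - 1) (Finset.range s)
            = Finset.range (s - 1) := by
          ext j; simp; omega
        rw [hfil, Finset.card_range, Nat.cast_sub (by omega : 1 ≤ s)]
        norm_num
      rw [hblocksum]
      push_cast
      ring
  -- positivity/absolute value facts
  have hε₁0 : 0 ≤ ε₁ := by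
    rw [hε₁]
    apply div_nonneg
    · exact mul_nonneg hB0.le (by linarith)
    · linarith
  have habsL : |L| = (1 - η) * |u₀ - x₀| * ε₁ := by
    rw [hLdef, abs_mul, abs_mul, abs_of_nonneg hε₁0,
      abs_of_nonneg (by linarith : (0:ℝ) ≤ 1 - η)]
    ring
  have hs0 : (0:ℝ) < (s:ℝ) := by exact_mod_cast (by omega : 0 < s)
  constructor
  · -- the limit
    have hlim : Filter.Tendsto
        (fun n : ℕ => lam * ((s : ℝ) - 1) / s - (1 - lam) * |L * (1 - q ^ n)|)
        Filter.atTop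
        (nhds (lam * ((s : ℝ) - 1) / s - (1 - lam) * |L|)) := by
      have h1 : Filter.Tendsto (fun n : ℕ => q ^ n) Filter.atTop (nhds 0) :=
        tendsto_pow_atTop_nhds_zero_of_lt_one hq0.le hq1
      have h2 : Filter.Tendsto (fun n : ℕ => L * (1 - q ^ n)) Filter.atTop
          (nhds (L * (1 - 0))) :=
        Filter.Tendsto.const_mul _ ((tendsto_const_nhds).sub h1)
      have h3 : Filter.Tendsto (fun n : ℕ => |L * (1 - q ^ n)|) Filter.atTop
          (nhds (|L * (1 - 0)|)) := h2.abs
      have h4 := (tendsto_const_nhds :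
          Filter.Tendsto (fun _ : ℕ => lam * ((s : ℝ) - 1) / s) Filter.atTop
            _).sub (h3.const_mul (1 - lam))
      simpa [mul_comm] using h4
    have heq : ∀ᶠ n : ℕ in Filter.atTop,
        lam * ((s : ℝ) - 1) / s - (1 - lam) * |L * (1 - q ^ n)| = U (n * s) := by
      filter_upwards [Filter.eventually_ge_atTop 1] with n hn
      rw [hU (n * s), hsum n, hy n]
      have hn0 : (0:ℝ) < (n:ℝ) := by exact_mod_cast hn
      have : ((n * s : ℕ) : ℝ) = (n : ℝ) * (s : ℝ) := by push_cast; ring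
      rw [this]
      field_simp
    have := hlim.congr' heq
    rw [habsL] at this
    convert this using 2
    ring
  · -- strict improvement
    intro hl0 hl1 hD hcond
    have hP0 : 0 < (1 - lam) * (1 - η) * |u₀ - x₀| := by
      rw [mul_assoc]; exact mul_pos (by linarith) hD
    set P : ℝ := (1 - lam) * (1 - η) * |u₀ - x₀| with hPdef
    have hPne : P ≠ 0 := ne_of_gt hP0
    have h1 : P * ε₁ < P * (1 - lam / (s : ℝ) / P) :=
      mul_lt_mul_of_pos_left hcond hP0
    have h2 : P * (1 - lam / (s : ℝ) / P) = P - lam / s := by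
      field_simp
    have h3 : lam * ((s : ℝ) - 1) / s = lam - lam / s := by
      field_simp
    rw [h3]
    nlinarith [h1, h2]
end
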